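/- arXiv:2109.04682 — 8 statements merged into one kernel-verified Lean document; each statement's English description precedes it below -/
import Mathlib

section
/- If there exists a Kurepa tree (a tree of height ω₁ with all levels countable and at least ℵ₂ many branches of length ω₁), then there exists a family {f_α : α < ω₂} of functions from ω₁ to ω that is pairwise almost disjoint, i.e., for all α < β < ω₂ the set {γ < ω₁ : f_α(γ) = f_β(γ)} is countable. -/
open Cardinal Set Ordinal

noncomputable section

/-- A tree of height `κ`, presented with an explicit level function. -/
structure OrdTree (κ : Ordinal) where
  N : Type
  lt : N → N → Prop
  lt_trans : ∀ {x y z}, lt x y → lt y z → lt x z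
  lev : N → Ordinal
  lev_lt : ∀ x, lev x < κ
  lt_lev : ∀ {x y}, lt x y → lev x < lev y
  exists_pred : ∀ x, ∀ β < lev x, ∃! y, lt y x ∧ lev y = β
  lev_surj : ∀ β < κ, ∃ x, lev x = β

namespace OrdTree

variable {κ : Ordinal}

/-- The `β`-th level of the tree. -/
def Lev (T : OrdTree κ) (β : Ordinal) : Set T.N := {x | T.lev x = β}

/-- A cofinal branch: a chain meeting every level below `κ`. -/
def IsBranch (T : OrdTree κ) (b : Set T.N) : Prop :=
  (∀ x ∈ b, ∀ y ∈ b, T.lt x y ∨ x = y ∨ T.lt y x) ∧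
  (∀ β < κ, ∃ x ∈ b, T.lev x = β)

end OrdTree

/-- A Kurepa tree: a tree of height `ω₁` all of whose levels are countable,
with at least `ℵ₂` many cofinal branches. -/
def IsKurepaTree (T : OrdTree (Cardinal.aleph 1).ord) : Prop :=
  (∀ β, (T.Lev β).Countable) ∧
  Cardinal.aleph 2 ≤ #{b : Set T.N // T.IsBranch b}

namespace KurepaAux

universe v

/-- `ω₁` in any universe is the lift of `ω₁` in universe `0`. -/
lemma ord_aleph1_eq :
    ((Cardinal.aleph 1).ord : Ordinal.{v}) =
      Ordinal.lift.{v} ((Cardinal.aleph 1).ord : Ordinal.{0}) := by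
  rw [Cardinal.lift_ord, Cardinal.lift_aleph, Ordinal.lift_one]

/-- `ω₂` in any universe is the lift of `ω₂` in universe `0`. -/
lemma ord_aleph2_eq :
    ((Cardinal.aleph 2).ord : Ordinal.{v}) =
      Ordinal.lift.{v} ((Cardinal.aleph 2).ord : Ordinal.{0}) := by
  rw [Cardinal.lift_ord, Cardinal.lift_aleph, Ordinal.lift_ofNat]

/-- Lowering an ordinal below `Ordinal.lift o` to universe `0`. -/
def down (o : Ordinal.{0}) (γ : Ordinal.{v}) : Ordinal.{0} :=
  if h : γ ≤ Ordinal.lift.{v} o then (Set.mem_range.1 (Ordinal.mem_range_lift_of_le h)).choose else 0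

lemma lift_down_eq {o : Ordinal.{0}} {γ : Ordinal.{v}}
    (h : γ ≤ Ordinal.lift.{v} o) : Ordinal.lift.{v} (down o γ) = γ := by
  rw [down, dif_pos h]
  exact (Set.mem_range.1 (Ordinal.mem_range_lift_of_le h)).choose_spec

lemma down_lt {o : Ordinal.{0}} {γ : Ordinal.{v}}
    (h : γ < Ordinal.lift.{v} o) : down o γ < o := by
  rw [← Ordinal.lift_lt.{v}, lift_down_eq h.le]
  exact h

lemma down_le_down {o : Ordinal.{0}} {γ γ' : Ordinal.{v}}
    (hγ : γ ≤ Ordinal.lift.{v} o) (hγ' : γ' ≤ Ordinal.lift.{v} o)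
    (h : γ ≤ γ') : down o γ ≤ down o γ' := by
  rw [← Ordinal.lift_le.{v}, lift_down_eq hγ, lift_down_eq hγ']
  exact h

lemma down_lift {o δ₀ : Ordinal.{0}} (h : δ₀ ≤ o) :
    down o (Ordinal.lift.{v} δ₀) = δ₀ :=
  Ordinal.lift_inj.1 (lift_down_eq (Ordinal.lift_le.2 h))

lemma lift_lt_omega1 {δ₀ : Ordinal.{0}} (h : δ₀ < (Cardinal.aleph 1).ord) :
    Ordinal.lift.{v} δ₀ < ((Cardinal.aleph 1).ord : Ordinal.{v}) := by
  rw [ord_aleph1_eq.{v}]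
  exact Ordinal.lift_lt.2 h

/-- A set of ordinals bounded below `ω₁` is countable. -/
lemma countable_of_lt_omega1 {γ₀ : Ordinal.{v}}
    (h : γ₀ < (Cardinal.aleph 1).ord) : (Set.Iio γ₀).Countable := by
  rw [countable_iff_lt_aleph_one, Ordinal.mk_Iio_ordinal]
  have h1 : γ₀.card < Cardinal.aleph 1 := Cardinal.lt_ord.1 h
  calc Cardinal.lift.{v+1} γ₀.card
      < Cardinal.lift.{v+1} (Cardinal.aleph 1) := Cardinal.lift_lt.2 h1
    _ = Cardinal.aleph 1 := by rw [Cardinal.lift_aleph, Ordinal.lift_one]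

variable {T : OrdTree (Cardinal.aleph 1).ord}

/-- The unique node of the branch `b` at level `γ`. -/
def node (b : {b : Set T.N // T.IsBranch b}) (γ : Ordinal)
    (hγ : γ < (Cardinal.aleph 1).ord) : T.N :=
  (b.2.2 γ hγ).choose

lemma node_mem (b : {b : Set T.N // T.IsBranch b}) (γ : Ordinal)
    (hγ : γ < (Cardinal.aleph 1).ord) : node b γ hγ ∈ b.1 :=
  (b.2.2 γ hγ).choose_spec.1

lemma node_lev (b : {b : Set T.N // T.IsBranch b}) (γ : Ordinal)
    (hγ : γ < (Cardinal.aleph 1).ord) : T.lev (node b γ hγ) = γ :=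
  (b.2.2 γ hγ).choose_spec.2

/-- Any element of a branch at level `γ` equals `node b γ`. -/
lemma eq_node (b : {b : Set T.N // T.IsBranch b}) (γ : Ordinal)
    (hγ : γ < (Cardinal.aleph 1).ord) {x : T.N} (hx : x ∈ b.1)
    (hlev : T.lev x = γ) : x = node b γ hγ := by
  rcases b.2.1 x hx (node b γ hγ) (node_mem b γ hγ) with h | h | h
  · exact absurd (T.lt_lev h) (by rw [hlev, node_lev]; exact lt_irrefl _)
  · exact h
  · exact absurd (T.lt_lev h) (by rw [hlev, node_lev]; exact lt_irrefl _)

lemma node_lt (b : {b : Set T.N // T.IsBranch b}) {γ' γ : Ordinal}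
    (hγ' : γ' < (Cardinal.aleph 1).ord) (hγ : γ < (Cardinal.aleph 1).ord)
    (hlt : γ' < γ) : T.lt (node b γ' hγ') (node b γ hγ) := by
  rcases b.2.1 _ (node_mem b γ' hγ') _ (node_mem b γ hγ) with h | h | h
  · exact h
  · exfalso
    have := congrArg T.lev h
    rw [node_lev, node_lev] at this
    exact absurd this hlt.ne
  · exact absurd (T.lt_lev h) (by rw [node_lev, node_lev]; exact not_lt.2 hlt.le)

/-- Agreement of two branches is downward closed. -/
lemma node_eq_of_lt (b₁ b₂ : {b : Set T.N // T.IsBranch b}) {γ' γ : Ordinal}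
    (hγ' : γ' < (Cardinal.aleph 1).ord) (hγ : γ < (Cardinal.aleph 1).ord)
    (hlt : γ' < γ) (heq : node b₁ γ hγ = node b₂ γ hγ) :
    node b₁ γ' hγ' = node b₂ γ' hγ' := by
  have h1 : T.lt (node b₁ γ' hγ') (node b₁ γ hγ) := node_lt b₁ hγ' hγ hlt
  have h2 : T.lt (node b₂ γ' hγ') (node b₁ γ hγ) := heq ▸ node_lt b₂ hγ' hγ hlt
  have hβ : γ' < T.lev (node b₁ γ hγ) := by rw [node_lev]; exact hlt
  obtain ⟨y, _, hu⟩ := T.exists_pred (node b₁ γ hγ) γ' hβ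
  rw [hu _ ⟨h1, node_lev b₁ γ' hγ'⟩, hu _ ⟨h2, node_lev b₂ γ' hγ'⟩]

/-- If two branches have the same nodes at every level, they are equal. -/
lemma branch_eq (b₁ b₂ : {b : Set T.N // T.IsBranch b})
    (h : ∀ γ (hγ : γ < (Cardinal.aleph 1).ord), node b₁ γ hγ = node b₂ γ hγ) :
    b₁ = b₂ := by
  apply Subtype.ext
  have key : ∀ (c₁ c₂ : {b : Set T.N // T.IsBranch b}),
      (∀ γ (hγ : γ < (Cardinal.aleph 1).ord), node c₁ γ hγ = node c₂ γ hγ) →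
      c₁.1 ⊆ c₂.1 := by
    intro c₁ c₂ hc x hx
    have hγ := T.lev_lt x
    have hx1 : x = node c₁ (T.lev x) hγ := eq_node c₁ _ hγ hx rfl
    rw [hx1, hc _ hγ]
    exact node_mem c₂ _ hγ
  exact subset_antisymm (key b₁ b₂ h) (key b₂ b₁ fun γ hγ => (h γ hγ).symm)

end KurepaAux

theorem stmt0
    (h : ∃ T : OrdTree (Cardinal.aleph 1).ord, IsKurepaTree T) :
    ∃ f : Ordinal → Ordinal → ℕ,
      ∀ α < (Cardinal.aleph 2).ord, ∀ β < (Cardinal.aleph 2).ord, α ≠ β →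
        {γ : Ordinal | γ < (Cardinal.aleph 1).ord ∧ f α γ = f β γ}.Countable := by
  classical
  obtain ⟨T, hLev, hBr⟩ := h
  -- a coding of nodes by naturals, injective on each level
  have hcode : ∀ β : Ordinal, ∃ e : T.N → ℕ,
      ∀ x y, T.lev x = β → T.lev y = β → e x = e y → x = y := by
    intro β
    obtain ⟨e, he⟩ := Set.countable_iff_exists_injective.1 (hLev β)
    refine ⟨fun x => if hx : T.lev x = β then e ⟨x, hx⟩ else 0, ?_⟩
    intro x y hx hy hxy
    simp only [dif_pos hx, dif_pos hy] at hxy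
    exact Subtype.ext_iff.1 (he hxy)
  choose e he using hcode
  set B := {b : Set T.N // T.IsBranch b} with hB
  -- an injection from `ω₂` (in universe 0) into branches
  have hmk : #(((Cardinal.aleph 2).ord : Ordinal.{0}).ToType) ≤ #B := by
    rw [Cardinal.mk_toType, Cardinal.card_ord]; exact hBr
  obtain ⟨j⟩ := (Cardinal.le_def _ _).1 hmk
  -- the branch associated to an ordinal `α < ω₂`
  let br : ∀ α : Ordinal, α < (Cardinal.aleph 2).ord → B := fun α hα =>
    j ((@Ordinal.ToType.mk _)
       ⟨KurepaAux.down ((Cardinal.aleph 2).ord) α, by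
          refine KurepaAux.down_lt ?_
          rwa [← KurepaAux.ord_aleph2_eq]⟩)
  have br_inj : ∀ α hα β hβ, br α hα = br β hβ → α = β := by
    intro α hα β hβ hab
    have h1 := Subtype.ext_iff.1 ((@Ordinal.ToType.mk _).injective (j.injective hab))
    have h2 : Ordinal.lift.{_} (KurepaAux.down ((Cardinal.aleph 2).ord) α) =
        Ordinal.lift (KurepaAux.down ((Cardinal.aleph 2).ord) β) := by
      exact congrArg _ h1
    rwa [KurepaAux.lift_down_eq (by rw [← KurepaAux.ord_aleph2_eq]; exact hα.le),
      KurepaAux.lift_down_eq (by rw [← KurepaAux.ord_aleph2_eq]; exact hβ.le)] at h2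
  -- the level (in the tree's universe) associated to an ordinal `γ < ω₁`
  let lv : Ordinal → Ordinal := fun γ =>
    Ordinal.lift (KurepaAux.down ((Cardinal.aleph 1).ord) γ)
  have lv_lt : ∀ γ : Ordinal, γ < (Cardinal.aleph 1).ord →
      lv γ < (Cardinal.aleph 1).ord := by
    intro γ hγ
    have := KurepaAux.down_lt (o := (Cardinal.aleph 1).ord) (γ := γ)
      (by rwa [← KurepaAux.ord_aleph1_eq])
    rw [KurepaAux.ord_aleph1_eq]
    exact Ordinal.lift_lt.2 this
  -- the functions
  refine ⟨fun α γ => if hh : α < (Cardinal.aleph 2).ord ∧ γ < (Cardinal.aleph 1).ord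
      then e (lv γ) (KurepaAux.node (br α hh.1) (lv γ) (lv_lt γ hh.2)) else 0, ?_⟩
  intro α hα β hβ hne
  set b₁ := br α hα with hb₁
  set b₂ := br β hβ with hb₂
  have hb : b₁ ≠ b₂ := fun hc => hne (br_inj α hα β hβ hc)
  -- a level (in the tree's universe) where the branches differ
  have hdiff : ∃ δ, ∃ hδ : δ < (Cardinal.aleph 1).ord,
      KurepaAux.node b₁ δ hδ ≠ KurepaAux.node b₂ δ hδ := by
    by_contra hc
    push_neg at hc
    exact hb (KurepaAux.branch_eq b₁ b₂ fun γ hγ => hc γ hγ)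
  obtain ⟨δ, hδ, hne₀⟩ := hdiff
  -- pull `δ` back to the universe of the statement
  have hδ0 : KurepaAux.down ((Cardinal.aleph 1).ord) δ < (Cardinal.aleph 1).ord :=
    KurepaAux.down_lt (by rwa [← KurepaAux.ord_aleph1_eq])
  have hliftδ : Ordinal.lift (KurepaAux.down ((Cardinal.aleph 1).ord) δ) = δ :=
    KurepaAux.lift_down_eq (by rw [← KurepaAux.ord_aleph1_eq]; exact hδ.le)
  have hexists : ∃ γ₀ : Ordinal, γ₀ < (Cardinal.aleph 1).ord ∧ lv γ₀ = δ := by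
    refine ⟨Ordinal.lift (KurepaAux.down ((Cardinal.aleph 1).ord) δ),
      KurepaAux.lift_lt_omega1 hδ0, ?_⟩
    show Ordinal.lift (KurepaAux.down ((Cardinal.aleph 1).ord)
      (Ordinal.lift (KurepaAux.down ((Cardinal.aleph 1).ord) δ))) = δ
    rw [KurepaAux.down_lift hδ0.le]
    exact hliftδ
  obtain ⟨γ₀, hγ₀lt, hlvγ₀⟩ := hexists
  -- the agreement set is contained in `Iio γ₀`
  have hsub : {γ : Ordinal | γ < (Cardinal.aleph 1).ord ∧
      (if hh : α < (Cardinal.aleph 2).ord ∧ γ < (Cardinal.aleph 1).ord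
        then e (lv γ) (KurepaAux.node (br α hh.1) (lv γ) (lv_lt γ hh.2)) else 0) =
      (if hh : β < (Cardinal.aleph 2).ord ∧ γ < (Cardinal.aleph 1).ord
        then e (lv γ) (KurepaAux.node (br β hh.1) (lv γ) (lv_lt γ hh.2)) else 0)} ⊆
      Set.Iio γ₀ := by
    intro γ hγ
    obtain ⟨hγ1, hfe⟩ := hγ
    rw [dif_pos ⟨hα, hγ1⟩, dif_pos ⟨hβ, hγ1⟩] at hfe
    have hnode : KurepaAux.node b₁ (lv γ) (lv_lt γ hγ1) =
        KurepaAux.node b₂ (lv γ) (lv_lt γ hγ1) :=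
      he (lv γ) _ _ (KurepaAux.node_lev _ _ _) (KurepaAux.node_lev _ _ _) hfe
    by_contra hge
    rw [Set.mem_Iio, not_lt] at hge
    -- `δ ≤ lv γ`
    have hdle : δ ≤ lv γ := by
      rw [← hlvγ₀]
      exact Ordinal.lift_le.2 (KurepaAux.down_le_down
        (by rw [← KurepaAux.ord_aleph1_eq]; exact hγ₀lt.le)
        (by rw [← KurepaAux.ord_aleph1_eq]; exact hγ1.le) hge)
    rcases eq_or_lt_of_le hdle with heq | hlt
    · exact hne₀ (by subst heq; exact hnode)
    · exact hne₀ (KurepaAux.node_eq_of_lt b₁ b₂ hδ (lv_lt γ hγ1) hlt hnode)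
  exact Set.Countable.mono hsub (KurepaAux.countable_of_lt_omega1 hγ₀lt)

end
end

section
/- If there exists a family {f_α : α < ω₂} of pairwise almost disjoint functions from ω₁ to ω, then there is a coloring c : ω₂ × ω₁ → ω such that for no set A ⊆ ω₂ of size 2 and no uncountable set B ⊆ ω₁ is c constant on A × B. That is, the polarized relation (ω₂, ω₁) → (2, ω₁)_ω fails. -/
open Cardinal Set Ordinal

noncomputable section

open Classical in
/-- Transfer an ordinal to another universe (meaningful when it is in the range of `lift`). -/
noncomputable def downOrd (α : Ordinal.{v}) : Ordinal.{u} :=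
  if h : ∃ a : Ordinal.{u}, Ordinal.lift.{v} a = Ordinal.lift.{u} α then h.choose else 0

open Classical in
lemma downOrd_lift {α : Ordinal.{v}}
    (h : ∃ a : Ordinal.{u}, Ordinal.lift.{v} a = Ordinal.lift.{u} α) :
    Ordinal.lift.{v} (downOrd.{v, u} α) = Ordinal.lift.{u} α := by
  rw [downOrd, dif_pos h]; exact h.choose_spec

lemma exists_downOrd {α : Ordinal.{v}} {o : Ordinal.{u}}
    (hα : Ordinal.lift.{u} α < Ordinal.lift.{v} o) :
    ∃ a : Ordinal.{u}, Ordinal.lift.{v} a = Ordinal.lift.{u} α :=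
  Ordinal.mem_range_lift_of_le hα.le

lemma lift_lt_aleph_two {α : Ordinal.{v}} (h : α < (Cardinal.aleph 2).ord) :
    Ordinal.lift.{u} α < Ordinal.lift.{v} ((Cardinal.aleph 2).ord : Ordinal.{u}) := by
  have h2 : Ordinal.lift.{v} ((Cardinal.aleph 2).ord : Ordinal.{u}) =
      Ordinal.lift.{u} ((Cardinal.aleph 2).ord : Ordinal.{v}) := by
    simp [Cardinal.lift_ord, Cardinal.lift_aleph, Ordinal.lift_ofNat]
  rw [h2]
  exact Ordinal.lift_lt.mpr h

lemma lift_lt_aleph_one {α : Ordinal.{v}} (h : α < (Cardinal.aleph 1).ord) :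
    Ordinal.lift.{u} α < Ordinal.lift.{v} ((Cardinal.aleph 1).ord : Ordinal.{u}) := by
  have h2 : Ordinal.lift.{v} ((Cardinal.aleph 1).ord : Ordinal.{u}) =
      Ordinal.lift.{u} ((Cardinal.aleph 1).ord : Ordinal.{v}) := by
    simp [Cardinal.lift_ord, Cardinal.lift_aleph, Ordinal.lift_one]
  rw [h2]
  exact Ordinal.lift_lt.mpr h

lemma downOrd_lt_aleph_two {α : Ordinal.{v}} (h : α < (Cardinal.aleph 2).ord) :
    downOrd.{v, u} α < (Cardinal.aleph 2).ord := by
  have hlt : Ordinal.lift.{v} (downOrd.{v, u} α) <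
      Ordinal.lift.{v} ((Cardinal.aleph 2).ord : Ordinal.{u}) := by
    rw [downOrd_lift (exists_downOrd (lift_lt_aleph_two h))]
    exact lift_lt_aleph_two h
  exact Ordinal.lift_lt.mp hlt

lemma downOrd_lt_aleph_one {α : Ordinal.{v}} (h : α < (Cardinal.aleph 1).ord) :
    downOrd.{v, u} α < (Cardinal.aleph 1).ord := by
  have hlt : Ordinal.lift.{v} (downOrd.{v, u} α) <
      Ordinal.lift.{v} ((Cardinal.aleph 1).ord : Ordinal.{u}) := by
    rw [downOrd_lift (exists_downOrd (lift_lt_aleph_one h))]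
    exact lift_lt_aleph_one h
  exact Ordinal.lift_lt.mp hlt

theorem stmt1
    (f : Ordinal → Ordinal → ℕ)
    (had : ∀ α < (Cardinal.aleph 2).ord, ∀ β < (Cardinal.aleph 2).ord, α ≠ β →
      {γ : Ordinal | γ < (Cardinal.aleph 1).ord ∧ f α γ = f β γ}.Countable) :
    ∃ c : Ordinal → Ordinal → ℕ,
      ¬ ∃ α₀ α₁ : Ordinal, α₀ < (Cardinal.aleph 2).ord ∧ α₁ < (Cardinal.aleph 2).ord ∧
        α₀ ≠ α₁ ∧ ∃ B : Set Ordinal, B ⊆ Set.Iio (Cardinal.aleph 1).ord ∧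
          #B = Cardinal.aleph 1 ∧
          ∃ n : ℕ, ∀ β ∈ B, c α₀ β = n ∧ c α₁ β = n := by
  refine ⟨fun α β => f (downOrd α) (downOrd β), ?_⟩
  rintro ⟨α₀, α₁, h0, h1, hne, B, hB, hBcard, n, hn⟩
  have hd0 := downOrd_lt_aleph_two h0
  have hd1 := downOrd_lt_aleph_two h1
  have hdne : downOrd α₀ ≠ downOrd α₁ := by
    intro h
    apply hne
    have : Ordinal.lift α₀ = Ordinal.lift α₁ := by
      rw [← downOrd_lift (exists_downOrd (lift_lt_aleph_two h0)),
        ← downOrd_lift (exists_downOrd (lift_lt_aleph_two h1)), h]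
    exact Ordinal.lift_inj.mp this
  have hS := had _ hd0 _ hd1 hdne
  obtain ⟨g, hg⟩ := Set.countable_iff_exists_injOn.mp hS
  have hmem : ∀ β ∈ B, downOrd β ∈
      {γ : Ordinal | γ < (Cardinal.aleph 1).ord ∧ f (downOrd α₀) γ = f (downOrd α₁) γ} := by
    intro β hβ
    refine ⟨downOrd_lt_aleph_one (hB hβ), ?_⟩
    have := hn β hβ
    simp only at this
    rw [this.1, this.2]
  have hBc : B.Countable := by
    rw [Set.countable_iff_exists_injOn]
    refine ⟨fun β => g (downOrd β), ?_⟩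
    intro β hβ β' hβ' hgg
    have h1 : downOrd β = downOrd β' := hg (hmem β hβ) (hmem β' hβ') hgg
    have : Ordinal.lift β = Ordinal.lift β' := by
      rw [← downOrd_lift (exists_downOrd (lift_lt_aleph_one (hB hβ))),
        ← downOrd_lift (exists_downOrd (lift_lt_aleph_one (hB hβ'))), h1]
    exact Ordinal.lift_inj.mp this
  have hle : #B ≤ ℵ₀ := hBc.le_aleph0
  rw [hBcard] at hle
  exact absurd hle Cardinal.aleph0_lt_aleph_one.not_ge
end
end

section
/- If there exists a Kurepa tree, then the polarized relation (ω₂, ω₁) → (2, ω₁)_ω fails: there is a coloring c : ω₂ × ω₁ → ω admitting no pair of distinct ordinals α₀, α₁ < ω₂ and uncountable B ⊆ ω₁ with c constant on {α₀, α₁} × B. -/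
open Cardinal Set Ordinal

noncomputable section

/-!
Fix `ℵ₂` distinct branches `b_α` of the Kurepa tree and code every (countable) level injectively
by natural numbers; colour `(α, β)` by the code of the node of `b_α` on level `β`. If the colouring
is constant on `{α₀, α₁} × B` with `B` uncountable, then `b_α₀` and `b_α₁` share their nodes on the
levels in `B`, which are cofinal in `ω₁`; two branches sharing cofinally many nodes coincide.
-/

theorem Ordinal.countable_Iic_of_lt_ord_aleph_one {γ : Ordinal} (hγ : γ < (ℵ₁).ord) :
    (Iic γ).Countable := by
  have hsucc : Order.succ γ < (ℵ₁).ord := (isSuccLimit_ord aleph0_lt_aleph_one.le).succ_lt hγ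
  rw [← Order.Iio_succ, ← le_aleph0_iff_set_countable, Cardinal.mk_Iio_ordinal, lift_le_aleph0,
    ← lt_aleph_one_iff]
  exact lt_ord.mp hsucc

theorem Ordinal.exists_mem_lt_of_not_countable {S : Set Ordinal} (hS : ¬ S.Countable)
    {γ : Ordinal} (hγ : γ < (ℵ₁).ord) : ∃ β ∈ S, γ < β := by
  by_contra! h
  exact hS ((countable_Iic_of_lt_ord_aleph_one hγ).mono h)

namespace OrdTree

universe u w

variable {κ : Ordinal.{u}} {T : OrdTree κ} {b b' : Set T.N}

theorem IsBranch.lt_of_lev_lt (hb : T.IsBranch b) {y x : T.N} (hy : y ∈ b) (hx : x ∈ b)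
    (h : T.lev y < T.lev x) : T.lt y x := by
  rcases hb.1 y hy x hx with hyx | rfl | hxy
  · exact hyx
  · exact absurd h (lt_irrefl _)
  · exact absurd (T.lt_lev hxy) h.not_gt

theorem IsBranch.mem_of_lev_lt (hb : T.IsBranch b) (hb' : T.IsBranch b') {x y : T.N}
    (hx : x ∈ b ∩ b') (hy : y ∈ b) (h : T.lev y < T.lev x) : y ∈ b' := by
  obtain ⟨z, hz, hzy⟩ := hb'.2 (T.lev y) (T.lev_lt y)
  have hzx : T.lt z x := hb'.lt_of_lev_lt hz hx.2 (hzy ▸ h)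
  have hyz : y = z := (T.exists_pred x (T.lev y) h).unique ⟨hb.lt_of_lev_lt hy hx.1 h, rfl⟩
    ⟨hzx, hzy⟩
  exact hyz ▸ hz

theorem IsBranch.eq_of_forall_exists_lt (hb : T.IsBranch b) (hb' : T.IsBranch b')
    (h : ∀ γ < κ, ∃ x ∈ b ∩ b', γ < T.lev x) : b = b' := by
  have subset : ∀ {c c' : Set T.N}, T.IsBranch c → T.IsBranch c' →
      (∀ γ < κ, ∃ x ∈ c ∩ c', γ < T.lev x) → c ⊆ c' := fun hc hc' h y hy => by
    obtain ⟨x, hx, hyx⟩ := h (T.lev y) (T.lev_lt y)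
    exact hc.mem_of_lev_lt hc' hx hy hyx
  refine subset_antisymm (subset hb hb' h) (subset hb' hb fun γ hγ => ?_)
  simpa only [inter_comm] using h γ hγ

theorem IsBranch.exists_mem_lift_lev_eq (hb : T.IsBranch b) {β : Ordinal.{w}}
    (hβ : lift.{u} β < lift.{w} κ) : ∃ x ∈ b, lift.{w} (T.lev x) = lift.{u} β := by
  obtain ⟨β', hβ', hlift⟩ := lt_lift_iff.mp hβ
  obtain ⟨x, hx, rfl⟩ := hb.2 β' hβ'
  exact ⟨x, hx, hlift⟩

section Coding

variable (T) (hT : ∀ β, (T.Lev β).Countable)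

def levelCode (x : T.N) : ℕ :=
  @Encodable.encode _ (hT (T.lev x)).toEncodable ⟨x, rfl⟩

theorem levelCode_eq {x : T.N} {β : Ordinal} (hx : T.lev x = β) :
    T.levelCode hT x = @Encodable.encode _ (hT β).toEncodable ⟨x, hx⟩ := by
  subst hx
  rfl

theorem levelCode_inj {x y : T.N} (hlev : T.lev x = T.lev y)
    (h : T.levelCode hT x = T.levelCode hT y) : x = y := by
  rw [levelCode_eq T hT rfl, levelCode_eq T hT hlev.symm] at h
  exact congrArg Subtype.val (@Encodable.encode_injective _ (hT _).toEncodable _ _ h)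

open Classical in
/-- `β` may live in another universe than the tree, so levels are compared after lifting;
the value `0` is junk when `b` has no node on that level. -/
def branchCode (b : Set T.N) (β : Ordinal.{w}) : ℕ :=
  if h : ∃ x ∈ b, lift.{w} (T.lev x) = lift.{u} β then T.levelCode hT h.choose else 0

theorem IsBranch.exists_mem_inter_of_branchCode_eq (hb : T.IsBranch b) (hb' : T.IsBranch b')
    {β : Ordinal.{w}} (hβ : lift.{u} β < lift.{w} κ)
    (h : T.branchCode hT b β = T.branchCode hT b' β) :
    ∃ x ∈ b ∩ b', lift.{w} (T.lev x) = lift.{u} β := by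
  have hx := hb.exists_mem_lift_lev_eq hβ
  have hx' := hb'.exists_mem_lift_lev_eq hβ
  rw [branchCode, branchCode, dif_pos hx, dif_pos hx'] at h
  have hlev : T.lev hx.choose = T.lev hx'.choose :=
    lift_inj.mp (hx.choose_spec.2.trans hx'.choose_spec.2.symm)
  have heq := T.levelCode_inj hT hlev h
  exact ⟨hx.choose, ⟨hx.choose_spec.1, heq ▸ hx'.choose_spec.1⟩, hx.choose_spec.2⟩

end Coding

theorem IsBranch.eq_of_not_countable {T : OrdTree.{u} (ℵ₁).ord} {b b' : Set T.N}
    (hb : T.IsBranch b) (hb' : T.IsBranch b') {B : Set Ordinal.{w}} (hB : ¬ B.Countable)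
    (h : ∀ β ∈ B, ∃ x ∈ b ∩ b', lift.{w} (T.lev x) = lift.{u} β) : b = b' := by
  have hB' : ¬ (Ordinal.lift.{u} '' B).Countable := fun hc =>
    hB ((mapsTo_image _ B).countable_of_injOn (fun _ _ _ _ h => Ordinal.lift_inj.mp h) hc)
  refine hb.eq_of_forall_exists_lt hb' fun γ hγ => ?_
  obtain ⟨_, ⟨β, hβ, rfl⟩, hγβ⟩ :=
    Ordinal.exists_mem_lt_of_not_countable hB' (γ := lift.{w} γ) (by simpa using hγ)
  obtain ⟨x, hx, hlev⟩ := h β hβ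
  exact ⟨x, hx, lift_lt.mp (hlev ▸ hγβ)⟩

end OrdTree

theorem stmt2
    (h : ∃ T : OrdTree (Cardinal.aleph 1).ord, IsKurepaTree T) :
    ∃ c : Ordinal → Ordinal → ℕ,
      ¬ ∃ α₀ α₁ : Ordinal, α₀ < (Cardinal.aleph 2).ord ∧ α₁ < (Cardinal.aleph 2).ord ∧
        α₀ ≠ α₁ ∧ ∃ B : Set Ordinal, B ⊆ Set.Iio (Cardinal.aleph 1).ord ∧
          ¬ B.Countable ∧
          ∃ n : ℕ, ∀ β ∈ B, c α₀ β = n ∧ c α₁ β = n := by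
  obtain ⟨T, hT, hbranches⟩ := h
  obtain ⟨F⟩ : Nonempty (Iio (ℵ_ 2).ord ↪ {b : Set T.N // T.IsBranch b}) := by
    rw [← lift_mk_le']
    simpa using hbranches
  refine ⟨fun α β => if hα : α < (ℵ_ 2).ord then T.branchCode hT (F ⟨α, hα⟩).1 β else 0, ?_⟩
  rintro ⟨α₀, α₁, h₀, h₁, hne, B, hB, hBunc, n, hn⟩
  apply hne
  suffices F ⟨α₀, h₀⟩ = F ⟨α₁, h₁⟩ from congrArg Subtype.val (F.injective this)
  refine Subtype.ext ((F _).2.eq_of_not_countable (F _).2 hBunc fun β hβ => ?_)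
  refine (F _).2.exists_mem_inter_of_branchCode_eq T hT (F _).2 (by simpa using hB hβ) ?_
  simpa only [dif_pos h₀, dif_pos h₁] using (hn β hβ).1.trans (hn β hβ).2.symm
end
end

section
/- Let κ be a regular uncountable cardinal and let 𝒯 be a κ-tree (a tree of height κ with all levels of size less than κ) that is very slim, i.e., the β-th level has cardinality strictly less than |β| for every β < κ. Then the set of cofinal branches of 𝒯 has cardinality strictly less than κ. In particular there are no very slim κ-Kurepa trees. -/
open Cardinal Set Ordinal

noncomputable section

namespace OrdTree

variable {κo : Ordinal} (T : OrdTree κo)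

/-- The node of a branch at level `β`. -/
noncomputable def nodeAt {b : Set T.N} (hb : T.IsBranch b) (β : Ordinal) (hβ : β < κo) :
    T.N :=
  (hb.2 β hβ).choose

lemma nodeAt_mem {b : Set T.N} (hb : T.IsBranch b) (β : Ordinal) (hβ : β < κo) :
    T.nodeAt hb β hβ ∈ b :=
  (hb.2 β hβ).choose_spec.1

lemma lev_nodeAt {b : Set T.N} (hb : T.IsBranch b) (β : Ordinal) (hβ : β < κo) :
    T.lev (T.nodeAt hb β hβ) = β :=
  (hb.2 β hβ).choose_spec.2

lemma eq_nodeAt {b : Set T.N} (hb : T.IsBranch b) {β : Ordinal} (hβ : β < κo)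
    {x : T.N} (hx : x ∈ b) (hlx : T.lev x = β) : x = T.nodeAt hb β hβ := by
  rcases hb.1 x hx _ (T.nodeAt_mem hb β hβ) with h | h | h
  · have := T.lt_lev h
    rw [hlx, T.lev_nodeAt] at this
    exact absurd this (lt_irrefl β)
  · exact h
  · have := T.lt_lev h
    rw [hlx, T.lev_nodeAt] at this
    exact absurd this (lt_irrefl β)

lemma chain_lt {b : Set T.N} (hb : T.IsBranch b) {x y : T.N} (hx : x ∈ b) (hy : y ∈ b)
    (hl : T.lev x < T.lev y) : T.lt x y := by
  rcases hb.1 x hx y hy with h | h | h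
  · exact h
  · subst h; exact absurd hl (lt_irrefl _)
  · exact absurd (T.lt_lev h) (not_lt.mpr hl.le)

lemma nodeAt_agree {b b' : Set T.N} (hb : T.IsBranch b) (hb' : T.IsBranch b')
    {δ β : Ordinal} (hδβ : δ < β) (hβ : β < κo) (hδ : δ < κo)
    (h : T.nodeAt hb β hβ = T.nodeAt hb' β hβ) :
    T.nodeAt hb δ hδ = T.nodeAt hb' δ hδ := by
  obtain ⟨y, _, huniq⟩ := T.exists_pred (T.nodeAt hb β hβ) δ
    (by rw [T.lev_nodeAt]; exact hδβ)
  have h1 : T.lt (T.nodeAt hb δ hδ) (T.nodeAt hb β hβ) :=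
    T.chain_lt hb (T.nodeAt_mem hb δ hδ) (T.nodeAt_mem hb β hβ)
      (by rw [T.lev_nodeAt, T.lev_nodeAt]; exact hδβ)
  have h2 : T.lt (T.nodeAt hb' δ hδ) (T.nodeAt hb β hβ) := by
    rw [h]
    exact T.chain_lt hb' (T.nodeAt_mem hb' δ hδ) (T.nodeAt_mem hb' β hβ)
      (by rw [T.lev_nodeAt, T.lev_nodeAt]; exact hδβ)
  exact (huniq _ ⟨h1, T.lev_nodeAt hb δ hδ⟩).trans (huniq _ ⟨h2, T.lev_nodeAt hb' δ hδ⟩).symm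

lemma branch_subset_of_agree {b b' : Set T.N} (hb : T.IsBranch b) (hb' : T.IsBranch b')
    (h : ∀ β (hβ : β < κo), T.nodeAt hb β hβ = T.nodeAt hb' β hβ) : b ⊆ b' := by
  intro x hx
  have hx' : x = T.nodeAt hb (T.lev x) (T.lev_lt x) := T.eq_nodeAt hb (T.lev_lt x) hx rfl
  rw [hx', h]
  exact T.nodeAt_mem hb' _ _

lemma branch_eq_of_agree {b b' : Set T.N} (hb : T.IsBranch b) (hb' : T.IsBranch b')
    (h : ∀ β (hβ : β < κo), T.nodeAt hb β hβ = T.nodeAt hb' β hβ) : b = b' :=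
  Set.Subset.antisymm (T.branch_subset_of_agree hb hb' h)
    (T.branch_subset_of_agree hb' hb (fun β hβ => (h β hβ).symm))

end OrdTree

/-- Helper: the ordinal corresponding to an element of `o.ToType`. -/
noncomputable def toOrd {o : Ordinal} (x : o.ToType) : Set.Iio o :=
  (Ordinal.ToType.mk (o := o)).symm x

lemma toOrd_enum {o : Ordinal} (y : Set.Iio o) :
    toOrd ((Ordinal.ToType.mk (o := o)) y) = y :=
  (Ordinal.ToType.mk (o := o)).symm_apply_apply y

lemma toOrd_injective {o : Ordinal} : Function.Injective (toOrd (o := o)) :=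
  (Ordinal.ToType.mk (o := o)).symm.injective

/-- A very slim `κ`-tree has fewer than `κ` cofinal branches;
in particular there are no very slim `κ`-Kurepa trees. -/
theorem stmt3 (κ : Cardinal) (hreg : κ.IsRegular) (huncount : Cardinal.aleph0 < κ)
    (T : OrdTree κ.ord)
    (hκtree : ∀ β < κ.ord, #(T.Lev β) < κ)
    (hveryslim : ∀ β, Ordinal.omega0 ≤ β → β < κ.ord → #(T.Lev β) < β.card) :
    #{b : Set T.N // T.IsBranch b} < κ := by
  by_contra hcon
  push_neg at hcon
  have hlim : Order.IsSuccLimit κ.ord := Cardinal.isSuccLimit_ord hreg.aleph0_le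
  have hcof : κ.ord.cof = κ := hreg.cof_eq
  -- get a κ-indexed injective family of branches
  have hle : #(κ.ord.ToType) ≤ #{b : Set T.N // T.IsBranch b} := by
    rwa [Cardinal.mk_toType, Cardinal.card_ord]
  obtain ⟨F0⟩ := (Cardinal.le_def _ _).mp hle
  set Br : Set.Iio κ.ord → {b : Set T.N // T.IsBranch b} :=
    fun α => F0 ((Ordinal.ToType.mk (o := κ.ord)) α) with hBr
  have hBrinj : Function.Injective Br := by
    intro a c h
    exact (Ordinal.ToType.mk (o := κ.ord)).injective (F0.injective h)
  -- split levels
  have hsplit : ∀ a c : Set.Iio κ.ord, a ≠ c →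
      ∃ δ, ∃ hδ : δ < κ.ord,
        T.nodeAt (Br a).2 δ hδ ≠ T.nodeAt (Br c).2 δ hδ := by
    intro a c hac
    by_contra hall
    push_neg at hall
    have : (Br a).1 = (Br c).1 :=
      T.branch_eq_of_agree (Br a).2 (Br c).2 (fun β hβ => hall β hβ)
    exact hac (hBrinj (Subtype.ext this))
  classical
  set D : Ordinal → Ordinal → Ordinal := fun a c =>
    if h : ∃ (ha : a < κ.ord) (hc : c < κ.ord), (⟨a, ha⟩ : Set.Iio κ.ord) ≠ ⟨c, hc⟩ then
      (hsplit ⟨a, h.choose⟩ ⟨c, h.choose_spec.choose⟩ h.choose_spec.choose_spec).choose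
    else 0 with hD
  have hκpos : (0 : Ordinal) < κ.ord := hlim.pos
  have hDlt : ∀ a c, D a c < κ.ord := by
    intro a c
    rw [hD]
    dsimp only
    split_ifs with h
    · exact (hsplit ⟨a, h.choose⟩ ⟨c, h.choose_spec.choose⟩
        h.choose_spec.choose_spec).choose_spec.choose
    · exact hκpos
  have hDspec : ∀ a c (ha : a < κ.ord) (hc : c < κ.ord), a ≠ c →
      ∃ hδ : D a c < κ.ord,
        T.nodeAt (Br ⟨a, ha⟩).2 (D a c) hδ ≠ T.nodeAt (Br ⟨c, hc⟩).2 (D a c) hδ := by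
    intro a c ha hc hac
    have h : ∃ (ha : a < κ.ord) (hc : c < κ.ord), (⟨a, ha⟩ : Set.Iio κ.ord) ≠ ⟨c, hc⟩ :=
      ⟨ha, hc, fun he => hac (congrArg Subtype.val he)⟩
    rw [hD]
    dsimp only
    rw [dif_pos h]
    exact (hsplit ⟨a, h.choose⟩ ⟨c, h.choose_spec.choose⟩
      h.choose_spec.choose_spec).choose_spec
  -- closure sequence
  set s : ℕ → Ordinal := fun n => Nat.rec Ordinal.omega0
    (fun _ sn => max (sn + 1)
      (⨆ p : sn.ToType × sn.ToType, D (toOrd p.1).1 (toOrd p.2).1 + 1)) n with hs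
  have hs0 : s 0 = Ordinal.omega0 := rfl
  have hssucc : ∀ n, s (n + 1) = max (s n + 1)
      (⨆ p : (s n).ToType × (s n).ToType, D (toOrd p.1).1 (toOrd p.2).1 + 1) := fun n => rfl
  have hslt : ∀ n, s n < κ.ord := by
    intro n
    induction n with
    | zero =>
      rw [hs0, ← Cardinal.ord_aleph0]
      exact Cardinal.ord_lt_ord.mpr huncount
    | succ n ih =>
      rw [hssucc]
      apply max_lt ((by simpa only [Ordinal.add_one_eq_succ] using hlim.succ_lt ih))
      apply Ordinal.iSup_lt_ord
      · simp only [Cardinal.mk_prod, Cardinal.mk_toType, Cardinal.lift_id, hcof]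
        exact Cardinal.mul_lt_of_lt hreg.aleph0_le (Cardinal.lt_ord.mp ih)
          (Cardinal.lt_ord.mp ih)
      · intro p
        exact (by simpa only [Ordinal.add_one_eq_succ] using hlim.succ_lt (hDlt _ _))
  have hsmono : ∀ n, s n < s (n + 1) := by
    intro n
    rw [hssucc]
    exact lt_of_lt_of_le (lt_add_one _) (le_max_left _ _)
  set β : Ordinal := ⨆ n, s n with hβdef
  have hβκ : β < κ.ord := by
    apply Ordinal.iSup_lt_ord
    · rw [Cardinal.mk_nat, hcof]; exact huncount
    · exact hslt
  have hωβ : Ordinal.omega0 ≤ β := by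
    have := Ordinal.le_iSup s 0
    rwa [hs0] at this
  have hsleβ : ∀ n, s n ≤ β := fun n => Ordinal.le_iSup s n
  have hclosed : ∀ a c, a < β → c < β → D a c < β := by
    intro a c haβ hcβ
    obtain ⟨n, hn⟩ := Ordinal.lt_iSup_iff.mp haβ
    obtain ⟨m, hm⟩ := Ordinal.lt_iSup_iff.mp hcβ
    have hsm : ∀ i j, i ≤ j → s i ≤ s j := by
      intro i j hij
      induction j with
      | zero => simp [Nat.le_zero.mp hij]
      | succ j ihj =>
        rcases Nat.lt_or_ge i (j + 1) with h | h
        · exact le_trans (ihj (Nat.lt_succ_iff.mp h)) (hsmono j).le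
        · simp [Nat.le_antisymm hij h]
    have ha' : a < s (max n m) := lt_of_lt_of_le hn (hsm _ _ (Nat.le_max_left n m))
    have hc' : c < s (max n m) := lt_of_lt_of_le hm (hsm _ _ (Nat.le_max_right n m))
    have key : D a c + 1 ≤ s (max n m + 1) := by
      rw [hssucc]
      refine le_trans ?_ (le_max_right _ _)
      have h2 := Ordinal.le_iSup
        (fun p : (s (max n m)).ToType × (s (max n m)).ToType =>
          D (toOrd p.1).1 (toOrd p.2).1 + 1)
        ((Ordinal.ToType.mk (o := _)) ⟨a, ha'⟩, (Ordinal.ToType.mk (o := _)) ⟨c, hc'⟩)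
      simpa only [toOrd_enum] using h2
    exact ((lt_add_one (D a c)).trans_le key).trans_le (hsleβ (max n m + 1))
  -- the final injection into level β
  have hmem : ∀ x : β.ToType, ((toOrd x : Set.Iio β) : Ordinal) < κ.ord :=
    fun x => lt_trans (toOrd x).2 hβκ
  have hg : ∀ x : β.ToType, T.nodeAt (Br ⟨(toOrd x).1, hmem x⟩).2 β hβκ ∈ T.Lev β :=
    fun x => T.lev_nodeAt _ β hβκ
  set g : β.ToType → T.Lev β :=
    fun x => ⟨T.nodeAt (Br ⟨(toOrd x).1, hmem x⟩).2 β hβκ, hg x⟩ with hgdef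
  have hginj : Function.Injective g := by
    intro x y hxy
    by_contra hne
    have htne : (toOrd x).1 ≠ (toOrd y).1 := by
      intro h
      exact hne (toOrd_injective (Subtype.ext h))
    obtain ⟨hδ, hdiff⟩ := hDspec (toOrd x).1 (toOrd y).1
      (hmem x) (hmem y) htne
    have hδβ : D (toOrd x).1 (toOrd y).1 < β := hclosed _ _ (toOrd x).2 (toOrd y).2
    have heqβ : T.nodeAt (Br ⟨(toOrd x).1, hmem x⟩).2 β hβκ =
        T.nodeAt (Br ⟨(toOrd y).1, hmem y⟩).2 β hβκ :=
      congrArg Subtype.val hxy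
    exact hdiff (T.nodeAt_agree _ _ hδβ hβκ hδ heqβ)
  have hcard : β.card ≤ #(T.Lev β) := by
    rw [← Cardinal.mk_toType]
    exact Cardinal.mk_le_of_injective hginj
  exact absurd (hveryslim β hωβ hβκ) (not_lt.mpr hcard)

end
end

section
/- Let κ be a strongly inaccessible cardinal. If the polarized relation (κ⁺, κ) → (2, κ)_χ holds for every cardinal χ < κ, then for every ordinal γ < κ and every cardinal χ < κ the relation (κ⁺, κ) → (γ, κ)_χ holds. Equivalently (contrapositive): if (κ⁺, κ) ↛ (γ, κ)_χ for some γ < κ and χ < κ, then (κ⁺, κ) ↛ (2, κ)_{χ'} for some cardinal χ' < κ (indeed χ' can be taken of size |χ × χ|). -/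
open Cardinal Set Ordinal

noncomputable section

/-- `A` is a set of ordinals of order type `γ`: it is the range of a strictly
monotone enumeration indexed by the ordinals below `γ`. -/
def HasOtp (A : Set Ordinal) (γ : Ordinal) : Prop :=
  ∃ e : Set.Iio γ → Ordinal, StrictMono e ∧ Set.range e = A

/-- The polarized partition relation `(λ, κ) → (γ, δ)_χ`: every coloring of
`λ × κ` with `χ` colors is constant on a product `A × B` with `otp A = γ`,
`otp B = δ`. -/
def PolRel (lam kap γ δ : Ordinal) (χ : Cardinal) : Prop :=
  ∀ c : Ordinal → Ordinal → Ordinal,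
    (∀ α < lam, ∀ β < kap, c α β < χ.ord) →
    ∃ A B : Set Ordinal, A ⊆ Set.Iio lam ∧ B ⊆ Set.Iio kap ∧
      HasOtp A γ ∧ HasOtp B δ ∧ ∃ i, ∀ α ∈ A, ∀ β ∈ B, c α β = i

/-!
Split the rows of `κ⁺` into consecutive blocks of length `L`, a regular cardinal with
`χ, |γ| < L < κ`. The colours of a block in column `β` form a function `L → χ`, i.e. one of
`χ ^ L < κ` colours. The relation `(κ⁺, κ) → (2, κ)_{χ ^ L}` for this block colouring yields a
block (one row of the homogeneous pair suffices) and `κ` columns on which it has the same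
pattern `L → χ`; by pigeonhole in the regular cardinal `L`, this pattern is constant on a set of
rows of order type `γ`.
-/

universe u v

namespace HasOtp

theorem nonempty {A : Set Ordinal} {γ : Ordinal} (hA : HasOtp A γ) (hγ : 0 < γ) :
    A.Nonempty := by
  obtain ⟨e, -, rfl⟩ := hA
  exact ⟨e ⟨0, hγ⟩, mem_range_self _⟩

theorem image {A : Set Ordinal} {γ : Ordinal} (hA : HasOtp A γ) {f : Ordinal → Ordinal}
    (hf : StrictMono f) : HasOtp (f '' A) γ := by
  obtain ⟨e, he, rfl⟩ := hA
  exact ⟨f ∘ e, hf.comp he, range_comp f e⟩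

end HasOtp

theorem exists_subset_hasOtp {X : Set Ordinal.{u}} {γ : Ordinal.{u}}
    (h : lift.{u + 1} γ.card < #X) : ∃ A ⊆ X, HasOtp A γ := by
  have hle : typeLT (Iio γ) ≤ typeLT X := by
    rw [type_lt_Iio]
    refine le_of_not_gt fun hlt => h.not_ge ?_
    simpa using card_le_card hlt.le
  obtain ⟨f⟩ := type_le_iff'.1 hle
  exact ⟨_, range_subset_iff.2 fun ξ => (f ξ).2,
    Subtype.val ∘ f, fun _ _ h => Subtype.mk_lt_mk.1 (f.map_rel_iff.2 h), rfl⟩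

theorem exists_hasOtp_monochromatic {L χ : Cardinal.{u}} (hL : L.IsRegular) (hχL : χ < L)
    {γ : Ordinal.{u}} (hγ : γ < L.ord) (g : Ordinal.{u} → Ordinal.{u})
    (hg : ∀ ν < L.ord, g ν < χ.ord) : ∃ X ⊆ Iio L.ord, HasOtp X γ ∧ ∃ j, ∀ ν ∈ X, g ν = j := by
  obtain ⟨j, t, htL, hLt, hj⟩ := infinite_pigeonhole_set (s := Iio L.ord)
    (fun ν => (⟨g ν, hg ν ν.2⟩ : Iio χ.ord)) (lift.{u + 1} L) (by simp [Cardinal.mk_Iio_ordinal])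
    (by simpa using hL.aleph0_le)
    (by rw [hL.lift.cof_ord, Cardinal.mk_Iio_ordinal, card_ord]; exact lift_lt.2 hχL)
  obtain ⟨X, hXt, hX⟩ := exists_subset_hasOtp (γ := γ) ((lift_lt.2 (lt_ord.1 hγ)).trans_le hLt)
  exact ⟨X, hXt.trans htL, hX, j, fun ν hν => congrArg Subtype.val (hj (hXt hν))⟩

theorem exists_injective_lt_ord_power (χ L : Cardinal.{u}) :
    ∃ code : (Iio L.ord → Iio χ.ord) → Ordinal.{u},
      Function.Injective code ∧ ∀ f, code f < (χ ^ L).ord := by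
  have hcard : #(Iio L.ord → Iio χ.ord) = #(Iio (χ ^ L).ord) := by
    simp only [← power_def, Cardinal.mk_Iio_ordinal, card_ord, lift_power]
  obtain ⟨enc⟩ := Cardinal.eq.1 hcard
  exact ⟨fun f => (enc f).1, Subtype.val_injective.comp enc.injective, fun f => (enc f).2⟩

theorem Cardinal.IsStrongPrelimit.power_lt {κ χ L : Cardinal} (hκ : IsStrongPrelimit κ)
    (hκ₀ : ℵ₀ ≤ κ) (hχ : χ < κ) (hL : L < κ) : χ ^ L < κ :=
  calc χ ^ L ≤ (2 ^ χ) ^ L := power_le_power_right (cantor χ).le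
    _ = 2 ^ (χ * L) := power_mul.symm
    _ < κ := hκ (mul_lt_of_lt hκ₀ hχ hL)

theorem PolRel.of_power_colors {lam L χ : Cardinal.{u}} {kap γ δ : Ordinal.{u}}
    {γ' : Ordinal.{v}} (hlam : ℵ₀ ≤ lam) (hLlam : L < lam) (hL : L.IsRegular) (hχL : χ < L)
    (hγL : γ < L.ord) (hγ' : 0 < γ') (hδ : 0 < δ) (h : PolRel lam.ord kap γ' δ (χ ^ L)) :
    PolRel lam.ord kap γ δ χ := by
  classical
  intro c hc
  set ℓ := L.ord
  have hblock : ∀ α < lam.ord, ∀ ν < ℓ, ℓ * α + ν < lam.ord := fun α hα ν hν =>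
    isPrincipal_add_ord hlam (isPrincipal_mul_ord hlam (ord_lt_ord.2 hLlam) hα)
      (hν.trans (ord_lt_ord.2 hLlam))
  have hrow : ∀ α < lam.ord, ∀ β < kap, ∀ ν < ℓ, c (ℓ * α + ν) β < χ.ord :=
    fun α hα β hβ ν hν => hc _ (hblock α hα ν hν) β hβ
  obtain ⟨code, hcode, hcode_lt⟩ := exists_injective_lt_ord_power χ L
  -- the code of the pattern of block `α` in column `β`; the junk value `0` never occurs in range
  let d : Ordinal → Ordinal → Ordinal := fun α β =>
    if hαβ : ∀ ν < ℓ, c (ℓ * α + ν) β < χ.ord then code fun ν => ⟨_, hαβ ν ν.2⟩ else 0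
  have hd : ∀ α (hα : α < lam.ord) β (hβ : β < kap),
      d α β = code fun ν => ⟨_, hrow α hα β hβ ν ν.2⟩ :=
    fun α hα β hβ => dif_pos (hrow α hα β hβ)
  obtain ⟨A', B, hA', hB, hA'otp, hBotp, i, hi⟩ :=
    h d fun α hα β hβ => (hd α hα β hβ).symm ▸ hcode_lt _
  obtain ⟨α₀, hα₀⟩ := hA'otp.nonempty hγ'
  obtain ⟨β₀, hβ₀⟩ := hBotp.nonempty hδ
  have hpattern : ∀ β ∈ B, ∀ ν < ℓ, c (ℓ * α₀ + ν) β = c (ℓ * α₀ + ν) β₀ := by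
    intro β hβ ν hν
    have := hcode <| (hd α₀ (hA' hα₀) β (hB hβ)).symm.trans <|
      (hi α₀ hα₀ β hβ).trans <| (hi α₀ hα₀ β₀ hβ₀).symm.trans (hd α₀ (hA' hα₀) β₀ (hB hβ₀))
    exact congrArg Subtype.val (congrFun this ⟨ν, hν⟩)
  obtain ⟨X, hXℓ, hXotp, j, hj⟩ := exists_hasOtp_monochromatic hL hχL hγL
    (fun ν => c (ℓ * α₀ + ν) β₀) fun ν hν => hrow α₀ (hA' hα₀) β₀ (hB hβ₀) ν hν
  refine ⟨(ℓ * α₀ + ·) '' X, B, ?_, hB, hXotp.image fun _ _ h => (add_lt_add_iff_left _).2 h,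
    hBotp, j, ?_⟩
  · rintro _ ⟨ν, hν, rfl⟩
    exact hblock α₀ (hA' hα₀) ν (hXℓ hν)
  · rintro _ ⟨ν, hν, rfl⟩ β hβ
    rw [hpattern β hβ ν (hXℓ hν)]
    exact hj ν hν

theorem stmt6 (κ : Cardinal) (hinacc : κ.IsInaccessible)
    (h2 : ∀ χ : Cardinal, χ < κ → PolRel (Order.succ κ).ord κ.ord 2 κ.ord χ) :
    ∀ γ < κ.ord, ∀ χ : Cardinal, χ < κ → PolRel (Order.succ κ).ord κ.ord γ κ.ord χ := by
  intro γ hγ χ hχ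
  set ν := max (max χ γ.card) ℵ₀
  set L := Order.succ ν
  have hνL : ν < L := Order.lt_succ ν
  have hLκ : L < κ :=
    hinacc.isSuccLimit.succ_lt (max_lt (max_lt hχ (lt_ord.1 hγ)) hinacc.aleph0_lt)
  have hχL : χ < L := ((le_max_left _ _).trans (le_max_left _ _)).trans_lt hνL
  have hγL : γ < L.ord := lt_ord.2 (((le_max_right _ _).trans (le_max_left _ _)).trans_lt hνL)
  have hpow : χ ^ L < κ :=
    IsStrongPrelimit.power_lt hinacc.isStrongPrelimit hinacc.aleph0_lt.le hχ hLκ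
  exact (h2 _ hpow).of_power_colors (hinacc.aleph0_lt.le.trans (Order.le_succ κ))
    (hLκ.trans (Order.lt_succ κ)) (isRegular_succ (le_max_right _ _)) hχL hγL two_pos
    (ord_pos.2 hinacc.pos)

end
end

section
/- Let κ be weakly compact. Then the polarized relation (κ⁺, κ) → (2, κ)_χ holds for every cardinal χ < κ: for every coloring c : κ⁺ × κ → χ there exist distinct α₀, α₁ < κ⁺ and B ⊆ κ with |B| = κ such that c is constant on {α₀, α₁} × B. -/
open Cardinal Set Ordinal
universe u
noncomputable section

/-- The partition relation `κ → (κ)²₂`. -/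
def ArrowsPairs (κ : Cardinal.{u}) : Prop :=
  ∀ c : Ordinal.{u} → Ordinal.{u} → Bool,
    ∃ H : Set Ordinal.{u}, H ⊆ Set.Iio κ.ord ∧ #H = Cardinal.lift.{u+1} κ ∧
      ∃ i : Bool, ∀ α ∈ H, ∀ β ∈ H, α < β → c α β = i

/-- `κ` is weakly compact: uncountable and `κ → (κ)²₂`. -/
def IsWeaklyCompact (κ : Cardinal.{u}) : Prop :=
  Cardinal.aleph0 < κ ∧ ArrowsPairs κ

/-- lex-less-than below `o` for 0-1 sequences. -/
def LtB (o : Ordinal.{u}) (f g : Ordinal.{u} → Bool) : Prop :=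
  ∃ δ < o, (∀ ε < δ, f ε = g ε) ∧ f δ = false ∧ g δ = true

theorem LtB.ne_below {o f g} (h : LtB o f g) : ∃ δ < o, f δ ≠ g δ := by
  obtain ⟨δ, hδ, _, hf, hg⟩ := h
  exact ⟨δ, hδ, by simp [hf, hg]⟩

theorem LtB.irrefl {o f} (h : LtB o f f) : False := by
  obtain ⟨δ, _, _, hf, hg⟩ := h; simp [hf] at hg

theorem LtB.asymm {o f g} (h1 : LtB o f g) (h2 : LtB o g f) : False := by
  obtain ⟨δ1, _, ha1, hf1, hg1⟩ := h1
  obtain ⟨δ2, _, ha2, hf2, hg2⟩ := h2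
  rcases lt_trichotomy δ1 δ2 with h | h | h
  · have := ha2 δ1 h; rw [hg1, hf1] at this; simp at this
  · subst h; rw [hf1] at hg2; simp at hg2
  · have := ha1 δ2 h; rw [hf2, hg2] at this; simp at this

theorem LtB.flip {o f g} (h : LtB o f g) :
    LtB o (fun ε => !(g ε)) (fun ε => !(f ε)) := by
  obtain ⟨δ, hδ, ha, hf, hg⟩ := h
  exact ⟨δ, hδ, fun ε hε => by simp only [ha ε hε], by simp [hg], by simp [hf]⟩

/-- The witness in `LtB` is below any point of difference. -/
theorem LtB.wit_le {δ ε : Ordinal.{u}} {f g : Ordinal.{u} → Bool}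
    (ha : ∀ ε' < δ, f ε' = g ε') (hne : f ε ≠ g ε) : δ ≤ ε := by
  by_contra hcon
  exact hne (ha ε (not_le.mp hcon))

/-- enumeration of a set of ordinals in increasing order -/
def enumSet (S : Set Ordinal.{u}) : Ordinal.{u} → Ordinal.{u} :=
  Ordinal.lt_wf.fix fun ξ ih => sInf (S \ Set.range fun ζ : Iio ξ => ih ζ.1 ζ.2)

theorem enumSet_def (S : Set Ordinal.{u}) (ξ : Ordinal.{u}) :
    enumSet S ξ = sInf (S \ Set.range fun ζ : Iio ξ => enumSet S ζ.1) := by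
  rw [enumSet, WellFounded.fix_eq]

theorem enumSet_spec (S : Set Ordinal.{u}) (ξ : Ordinal.{u})
    (h : Cardinal.lift.{u+1} ξ.card < #S) :
    enumSet S ξ ∈ S ∧ ∀ ζ < ξ, enumSet S ζ < enumSet S ξ := by
  induction ξ using Ordinal.induction with
  | _ ξ IH =>
  have hne : (S \ Set.range fun ζ : Iio ξ => enumSet S ζ.1).Nonempty := by
    rw [Set.nonempty_iff_ne_empty]
    intro hemp
    have hsub : S ⊆ Set.range fun ζ : Iio ξ => enumSet S ζ.1 := by
      intro x hx
      by_contra hx'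
      exact (Set.eq_empty_iff_forall_notMem.mp hemp x) ⟨hx, hx'⟩
    have := (Cardinal.mk_le_mk_of_subset hsub).trans Cardinal.mk_range_le
    rw [Ordinal.mk_Iio_ordinal] at this
    exact absurd this (not_le.mpr h)
  have hmem := csInf_mem hne
  rw [← enumSet_def] at hmem
  refine ⟨hmem.1, fun ζ hζ => ?_⟩
  have hζcard : Cardinal.lift.{u+1} ζ.card < #S :=
    lt_of_le_of_lt (by exact_mod_cast Cardinal.lift_le.mpr (Ordinal.card_le_card hζ.le)) h
  have hζspec := IH ζ hζ hζcard
  -- enumSet S ζ is a member of S \ range over Iio ζ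
  have hζmem : enumSet S ζ ∈ S \ Set.range fun ζ' : Iio ζ => enumSet S ζ'.1 := by
    rw [enumSet_def]
    apply csInf_mem
    rw [Set.nonempty_iff_ne_empty]
    intro hemp
    have hsub : S ⊆ Set.range fun ζ' : Iio ζ => enumSet S ζ'.1 := by
      intro x hx; by_contra hx'
      exact (Set.eq_empty_iff_forall_notMem.mp hemp x) ⟨hx, hx'⟩
    have := (Cardinal.mk_le_mk_of_subset hsub).trans Cardinal.mk_range_le
    rw [Ordinal.mk_Iio_ordinal] at this
    exact absurd this (not_le.mpr hζcard)
  -- sInf over ξ-set is ≤ any member of the ξ-set; enumSet S ζ might not be in ξ-set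
  -- but enumSet S ξ ∈ S \ range over Iio ξ ⊆ S \ range over Iio ζ, so
  -- enumSet S ζ = sInf (S \ range Iio ζ) ≤ enumSet S ξ.
  have hle : enumSet S ζ ≤ enumSet S ξ := by
    rw [enumSet_def S ζ]
    apply csInf_le (OrderBot.bddBelow _)
    refine ⟨hmem.1, ?_⟩
    intro hr
    obtain ⟨⟨ζ', hζ'⟩, hζ'eq⟩ := hr
    exact hmem.2 ⟨⟨ζ', hζ'.trans hζ⟩, hζ'eq⟩
  have hneq : enumSet S ζ ≠ enumSet S ξ := by
    intro heq
    exact hmem.2 ⟨⟨ζ, hζ⟩, heq⟩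
  exact lt_of_le_of_ne hle hneq

theorem noChain (o : Ordinal.{u}) (G : Ordinal.{u} → (Ordinal.{u} → Bool))
    (hG : ∀ ξ η, ξ < η → η < ((Order.succ o.card) ⊔ ℵ₀).ord → LtB o (G ξ) (G η)) :
    False := by
  induction o using Ordinal.induction generalizing G with
  | _ o IH =>
  set ι := ((Order.succ o.card) ⊔ ℵ₀).ord with hι
  -- injectivity of the restriction to Iio o
  have hinj : Function.Injective fun ξ : Iio ι => (fun ε : Iio o => G ξ.1 ε.1) := by
    rintro ⟨ξ, hξ⟩ ⟨η, hη⟩ heq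
    by_contra hne
    have hne' : ξ ≠ η := fun h => hne (by simp [h])
    rcases hne'.lt_or_gt with h | h
    · obtain ⟨δ, hδ, hd⟩ := (hG ξ η h hη).ne_below
      exact hd (congrFun heq ⟨δ, hδ⟩)
    · obtain ⟨δ, hδ, hd⟩ := (hG η ξ h hξ).ne_below
      exact hd (congrFun heq ⟨δ, hδ⟩).symm
  have hcard : Cardinal.lift.{u+1} ((Order.succ o.card) ⊔ ℵ₀) ≤ 2 ^ Cardinal.lift.{u+1} o.card := by
    have h2 := Cardinal.mk_le_of_injective hinj
    rw [Ordinal.mk_Iio_ordinal, Cardinal.card_ord] at h2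
    calc Cardinal.lift.{u+1} ((Order.succ o.card) ⊔ ℵ₀) ≤ #(Iio o → Bool) := h2
      _ = _ := by
          rw [Cardinal.mk_arrow, Cardinal.mk_bool, Ordinal.mk_Iio_ordinal]
          simp
  -- rule out finite o
  rcases lt_or_ge o.card ℵ₀ with hfin | hinf
  · have h1 : (2 : Cardinal.{u+1}) ^ Cardinal.lift.{u+1} o.card < ℵ₀ :=
      Cardinal.power_lt_aleph0 (Cardinal.nat_lt_aleph0 2) (Cardinal.lift_lt_aleph0.mpr hfin)
    have h2 : (ℵ₀ : Cardinal.{u+1}) ≤ Cardinal.lift.{u+1} ((Order.succ o.card) ⊔ ℵ₀) := by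
      simpa using Cardinal.lift_le.mpr (le_sup_right : ℵ₀ ≤ (Order.succ o.card) ⊔ ℵ₀)
    exact absurd h1 (not_lt.mpr (h2.trans hcard))
  -- o infinite
  have hsuccinf : ℵ₀ ≤ Order.succ o.card := hinf.trans (Order.le_succ _)
  have hιeq : ι = (Order.succ o.card).ord := by
    rw [hι, sup_eq_left.mpr hsuccinf]
  have hιlim : Order.IsSuccLimit ι := by rw [hιeq]; exact Cardinal.isSuccLimit_ord hsuccinf
  -- difference points
  have hwit : ∀ ξ, ξ < ι → ∃ δ, δ < o ∧ (∀ ε < δ, G ξ ε = G (ξ+1) ε) ∧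
      G ξ δ = false ∧ G (ξ+1) δ = true := by
    intro ξ hξ
    have h1 : ξ + 1 < ι := by
      have := hιlim.succ_lt hξ
      rwa [← Ordinal.add_one_eq_succ ξ] at this
    obtain ⟨δ, hδ, h⟩ := hG ξ (ξ+1) (lt_add_one ξ) h1
    exact ⟨δ, hδ, h⟩
  classical
  choose! Δ hΔo hΔa hΔf hΔg using hwit
  -- a big fiber
  have hfib : ∃ δ, δ < o ∧ Cardinal.lift.{u+1} o.card <
      #{ξ : Ordinal.{u} | ξ < ι ∧ Δ ξ = δ} := by
    by_contra hcon
    push_neg at hcon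
    have hcover : Iio ι ⊆ ⋃ δ : Iio o, {ξ : Ordinal.{u} | ξ < ι ∧ Δ ξ = δ.1} := fun ξ hξ =>
      Set.mem_iUnion.mpr ⟨⟨Δ ξ, hΔo ξ hξ⟩, hξ, rfl⟩
    have hb : #(Iio ι) ≤ Cardinal.lift.{u+1} o.card * Cardinal.lift.{u+1} o.card := by
      refine (Cardinal.mk_le_mk_of_subset hcover).trans ((Cardinal.mk_iUnion_le _).trans ?_)
      refine mul_le_mul' (by rw [Ordinal.mk_Iio_ordinal]) (ciSup_le' fun δ => hcon δ.1 δ.2)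
    rw [Ordinal.mk_Iio_ordinal, hι, Cardinal.card_ord,
      Cardinal.mul_eq_self (Cardinal.aleph0_le_lift.mpr hinf)] at hb
    have := Cardinal.lift_le.mp hb
    have h3 : Order.succ o.card ≤ o.card := le_trans le_sup_left this
    exact absurd h3 (not_le.mpr (Order.lt_succ _))
  obtain ⟨δs, hδso, hbig⟩ := hfib
  set S := {ξ : Ordinal.{u} | ξ < ι ∧ Δ ξ = δs} with hS
  set ι' := ((Order.succ δs.card) ⊔ ℵ₀).ord with hι'
  -- the enumeration is defined below ι'
  have hdom : ∀ ζ, ζ < ι' → Cardinal.lift.{u+1} ζ.card < #S := by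
    intro ζ hζ
    have h1 : ζ.card < (Order.succ δs.card) ⊔ ℵ₀ := Cardinal.lt_ord.mp hζ
    have h2 : (Order.succ δs.card) ⊔ ℵ₀ ≤ Order.succ o.card :=
      sup_le (Order.succ_le_succ (Ordinal.card_le_card hδso.le)) hsuccinf
    have h3 : ζ.card ≤ o.card := Order.lt_succ_iff.mp (lt_of_lt_of_le h1 h2)
    exact lt_of_le_of_lt (Cardinal.lift_le.mpr h3) hbig
  have hmem : ∀ ζ, ζ < ι' → enumSet S ζ ∈ S := fun ζ hζ => (enumSet_spec S ζ (hdom ζ hζ)).1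
  have hmono : ∀ ζ ζ', ζ < ζ' → ζ' < ι' → enumSet S ζ < enumSet S ζ' :=
    fun ζ ζ' h h' => (enumSet_spec S ζ' (hdom ζ' h')).2 ζ h
  -- the restricted chain
  refine IH δs hδso (fun ζ => G (enumSet S ζ)) ?_
  intro ζ ζ' hζζ' hζ'
  have hζ : ζ < ι' := hζζ'.trans hζ'
  set ξ := enumSet S ζ with hξ
  set η := enumSet S ζ' with hη
  have hξS : ξ ∈ S := hmem ζ hζ
  have hηS : η ∈ S := hmem ζ' hζ'
  have hξη : ξ < η := hmono ζ ζ' hζζ' hζ'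
  have hξι : ξ < ι := hξS.1
  have hηι : η < ι := hηS.1
  have hmain := hG ξ η hξη hηι
  -- G ξ and G η must differ below δs
  have hdiff : ∃ ε, ε < δs ∧ G ξ ε ≠ G η ε := by
    by_contra hagree
    push_neg at hagree
    have hagree' : ∀ ε < δs, G ξ ε = G η ε := fun ε hε => hagree ε hε
    have hQ : LtB o (G η) (G (ξ+1)) := by
      refine ⟨δs, hδso, ?_, ?_, ?_⟩
      · intro ε hε
        rw [← hagree' ε hε]
        have := hΔa ξ hξι
        rw [hξS.2] at this
        exact this ε hε
      · have := hΔf η hηι; rwa [hηS.2] at this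
      · have := hΔg ξ hξι; rwa [hξS.2] at this
    have hle : ξ + 1 ≤ η := by
      rw [Ordinal.add_one_eq_succ]; exact Order.succ_le_of_lt hξη
    rcases eq_or_lt_of_le hle with heq | hlt
    · rw [heq] at hQ; exact hQ.irrefl
    · exact hQ.asymm (hG (ξ+1) η hlt hηι)
  obtain ⟨ε, hεδ, hεne⟩ := hdiff
  obtain ⟨δ0, hδ0o, ha0, hf0, hg0⟩ := hmain
  exact ⟨δ0, lt_of_le_of_lt (LtB.wit_le ha0 hεne) hεδ, ha0, hf0, hg0⟩

theorem chain_contradiction {χ : Cardinal.{u}} (hχinf : ℵ₀ ≤ χ)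
    (H : Set Ordinal.{u}) (hcard : #H = Cardinal.lift.{u+1} (Order.succ χ))
    (F' : Ordinal.{u} → Ordinal.{u} → Bool)
    (hch : ∀ α β, α ∈ H → β ∈ H → α < β → LtB χ.ord (F' α) (F' β)) : False := by
  apply noChain χ.ord (fun ζ => F' (enumSet H ζ))
  have hidx : ((Order.succ χ.ord.card) ⊔ ℵ₀).ord = (Order.succ χ).ord := by
    rw [Cardinal.card_ord, sup_eq_left.mpr (hχinf.trans (Order.le_succ _))]
  have hdom : ∀ ζ, ζ < (Order.succ χ).ord → Cardinal.lift.{u+1} ζ.card < #H := by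
    intro ζ hζ
    rw [hcard]
    exact Cardinal.lift_lt.mpr (Cardinal.lt_ord.mp hζ)
  intro ζ η hζη hη
  rw [hidx] at hη
  have hζ : ζ < (Order.succ χ).ord := hζη.trans hη
  exact hch _ _ (enumSet_spec H ζ (hdom ζ hζ)).1 (enumSet_spec H η (hdom η hη)).1
    ((enumSet_spec H η (hdom η hη)).2 ζ hζη)

theorem succ_lt_of_wc {κ χ : Cardinal.{u}} (hwc : IsWeaklyCompact κ) (hχ : χ < κ) :
    Order.succ χ < κ := by
  rcases lt_or_eq_of_le (Order.succ_le_of_lt hχ) with h | heq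
  · exact h
  exfalso
  have hχinf : ℵ₀ ≤ χ := by
    by_contra hcon
    have : Order.succ χ ≤ ℵ₀ := Order.succ_le_of_lt (not_le.mp hcon)
    rw [heq] at this
    exact absurd hwc.1 (not_lt.mpr this)
  -- build an injection from Iio κ.ord into binary sequences of length χ.ord
  have hmkle : #(Iio κ.ord) ≤ #(Iio χ.ord → Bool) := by
    rw [Ordinal.mk_Iio_ordinal, Cardinal.card_ord, Cardinal.mk_arrow, Cardinal.mk_bool,
      Ordinal.mk_Iio_ordinal, Cardinal.card_ord, Cardinal.lift_id'.{0,u+1},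
      show Cardinal.lift.{u+1,0} 2 = 2 from by simp]
    calc Cardinal.lift.{u+1} κ ≤ Cardinal.lift.{u+1} (2 ^ χ) :=
          Cardinal.lift_le.mpr (by rw [← heq]; exact Order.succ_le_of_lt (Cardinal.cantor χ))
      _ = 2 ^ Cardinal.lift.{u+1} χ := by rw [Cardinal.lift_power]; norm_num
  obtain ⟨emb⟩ := Cardinal.le_def _ _ |>.mp hmkle
  classical
  set F : Ordinal.{u} → Ordinal.{u} → Bool := fun α ε =>
    if h : α < κ.ord ∧ ε < χ.ord then emb ⟨α, h.1⟩ ⟨ε, h.2⟩ else false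
    with hF
  have htri : ∀ α β, α < κ.ord → β < κ.ord → α ≠ β →
      LtB χ.ord (F α) (F β) ∨ LtB χ.ord (F β) (F α) := by
    intro α β hα hβ hne
    have hembne : emb ⟨α, hα⟩ ≠ emb ⟨β, hβ⟩ := fun h => hne (Subtype.mk_eq_mk.mp (emb.injective h))
    obtain ⟨⟨ε, hε⟩, hdne⟩ := Function.ne_iff.mp hembne
    have hFne : F α ε ≠ F β ε := by
      simp only [hF]
      rw [dif_pos (show α < κ.ord ∧ ε < χ.ord from ⟨hα, hε⟩),
        dif_pos (show β < κ.ord ∧ ε < χ.ord from ⟨hβ, hε⟩)]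
      exact hdne
    set D := {ε' : Ordinal.{u} | F α ε' ≠ F β ε'} with hD
    have hDne : D.Nonempty := ⟨ε, hFne⟩
    have hδD : sInf D ∈ D := csInf_mem hDne
    have hδχ : sInf D < χ.ord := lt_of_le_of_lt (csInf_le (OrderBot.bddBelow _) hFne) hε
    have hagree : ∀ ε' < sInf D, F α ε' = F β ε' := by
      intro ε' hε'
      by_contra hcon
      exact absurd (csInf_le (OrderBot.bddBelow _) (show ε' ∈ D from hcon)) (not_le.mpr hε')
    rcases Bool.eq_false_or_eq_true (F α (sInf D)) with hh | hh
    · right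
      refine ⟨sInf D, hδχ, fun ε' hε' => (hagree ε' hε').symm, ?_, hh⟩
      rcases Bool.eq_false_or_eq_true (F β (sInf D)) with h2 | h2
      · exact absurd (hh.trans h2.symm) hδD
      · exact h2
    · left
      refine ⟨sInf D, hδχ, hagree, hh, ?_⟩
      rcases Bool.eq_false_or_eq_true (F β (sInf D)) with h2 | h2
      · exact h2
      · exact absurd (hh.trans h2.symm) hδD
  obtain ⟨H, hsub, hcard, i, hom⟩ := hwc.2 (fun α β => decide (LtB χ.ord (F α) (F β)))
  rw [← heq] at hcard
  cases i with
  | true =>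
    refine chain_contradiction hχinf H hcard F (fun α β hαH hβH hαβ => ?_)
    exact of_decide_eq_true (hom α hαH β hβH hαβ)
  | false =>
    refine chain_contradiction hχinf H hcard (fun α ε => !(F α ε)) (fun α β hαH hβH hαβ => ?_)
    have h1 : ¬ LtB χ.ord (F α) (F β) := of_decide_eq_false (hom α hαH β hβH hαβ)
    have h2 : LtB χ.ord (F β) (F α) :=
      ((htri α β (hsub hαH) (hsub hβH) (ne_of_lt hαβ)).resolve_left h1)
    exact h2.flip

theorem stmt8 (κ : Cardinal.{u}) (hwc : IsWeaklyCompact κ)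
    (χ : Cardinal.{u}) (hχ : χ < κ)
    (c : Ordinal.{u} → Ordinal.{u} → Ordinal.{u})
    (hc : ∀ α < (Order.succ κ).ord, ∀ β < κ.ord, c α β < χ.ord) :
    ∃ α₀ α₁ : Ordinal.{u}, α₀ < (Order.succ κ).ord ∧ α₁ < (Order.succ κ).ord ∧
      α₀ ≠ α₁ ∧ ∃ B : Set Ordinal.{u}, B ⊆ Set.Iio κ.ord ∧
        #B = Cardinal.lift.{u+1} κ ∧
        ∃ i, ∀ β ∈ B, c α₀ β = i ∧ c α₁ β = i := by
  classical
  have hsucclt : Order.succ χ < κ := succ_lt_of_wc hwc hχ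
  have hordle : (Order.succ χ).ord ≤ κ.ord := Cardinal.ord_le_ord.mpr hsucclt.le
  have hordlt : κ.ord < (Order.succ κ).ord := Cardinal.ord_lt_ord.mpr (Order.lt_succ κ)
  -- for every column β < κ.ord there is a repeated value among the first succ χ rows
  have hpair : ∀ β, β < κ.ord → ∃ γ₀ γ₁, γ₀ < γ₁ ∧ γ₁ < (Order.succ χ).ord ∧
      c γ₀ β = c γ₁ β := by
    intro β hβ
    by_contra hcon
    push_neg at hcon
    have hginj : Function.Injective fun γ : Iio (Order.succ χ).ord =>
        (⟨c γ.1 β, hc γ.1 (lt_of_lt_of_le γ.2 (hordle.trans hordlt.le)) β hβ⟩ : Iio χ.ord) := by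
      rintro ⟨γ, hγ⟩ ⟨γ', hγ'⟩ hval
      have hval' : c γ β = c γ' β := Subtype.mk_eq_mk.mp hval
      by_contra hne
      have hne' : γ ≠ γ' := fun h => hne (by simp [h])
      rcases hne'.lt_or_gt with h | h
      · exact hcon γ γ' h hγ' hval'
      · exact hcon γ' γ h hγ hval'.symm
    have := Cardinal.mk_le_of_injective hginj
    rw [Ordinal.mk_Iio_ordinal, Ordinal.mk_Iio_ordinal, Cardinal.card_ord,
      Cardinal.card_ord] at this
    exact absurd (Cardinal.lift_le.mp this) (not_le.mpr (Order.lt_succ χ))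
  choose! G0 G1 hlt01 hlt1 hceq using hpair
  obtain ⟨H, hsub, hcard, i, hom⟩ := hwc.2 (fun β β' =>
    decide (G0 β = G0 β' ∧ G1 β = G1 β' ∧ c (G0 β) β = c (G0 β') β'))
  cases i with
  | true =>
    have hκ0 : κ ≠ 0 := (Cardinal.aleph0_pos.trans hwc.1).ne'
    have hHne : H.Nonempty := by
      rw [← Set.nonempty_coe_sort, ← Cardinal.mk_ne_zero_iff, hcard]
      simpa using hκ0
    obtain ⟨β₀, hβ₀⟩ := hHne
    have hβ₀κ : β₀ < κ.ord := hsub hβ₀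
    have htriple : ∀ β ∈ H, G0 β = G0 β₀ ∧ G1 β = G1 β₀ ∧
        c (G0 β) β = c (G0 β₀) β₀ := by
      intro β hβ
      rcases lt_trichotomy β β₀ with h | h | h
      · exact of_decide_eq_true (hom β hβ β₀ hβ₀ h)
      · subst h; exact ⟨rfl, rfl, rfl⟩
      · obtain ⟨e0, e1, e2⟩ := of_decide_eq_true (hom β₀ hβ₀ β hβ h)
        exact ⟨e0.symm, e1.symm, e2.symm⟩
    have hG1β₀ : G1 β₀ < (Order.succ χ).ord := hlt1 β₀ hβ₀κ
    have hG0β₀ : G0 β₀ < G1 β₀ := hlt01 β₀ hβ₀κ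
    refine ⟨G0 β₀, G1 β₀, ?_, ?_, ne_of_lt hG0β₀, H, hsub, hcard, c (G0 β₀) β₀, ?_⟩
    · exact lt_of_lt_of_le (hG0β₀.trans hG1β₀) (hordle.trans hordlt.le)
    · exact lt_of_lt_of_le hG1β₀ (hordle.trans hordlt.le)
    · intro β hβ
      obtain ⟨e0, e1, e2⟩ := htriple β hβ
      have hβκ : β < κ.ord := hsub hβ
      constructor
      · rw [e0] at e2; exact e2
      · rw [← e1, ← hceq β hβκ]; exact e2
  | false =>
    exfalso
    -- the triple map is injective on H, contradicting cardinalities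
    set t : H → (Iio (Order.succ χ).ord × Iio (Order.succ χ).ord × Iio χ.ord) :=
      fun b => (⟨G0 b.1, (hlt01 b.1 (hsub b.2)).trans (hlt1 b.1 (hsub b.2))⟩,
        ⟨G1 b.1, hlt1 b.1 (hsub b.2)⟩,
        ⟨c (G0 b.1) b.1,
          hc _ (lt_of_lt_of_le ((hlt01 b.1 (hsub b.2)).trans (hlt1 b.1 (hsub b.2)))
            (hordle.trans hordlt.le)) _ (hsub b.2)⟩) with ht
    have htinj : Function.Injective t := by
      rintro ⟨β, hβ⟩ ⟨β', hβ'⟩ hval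
      simp only [ht, Prod.mk.injEq, Subtype.mk_eq_mk] at hval
      by_contra hne
      have hne' : β ≠ β' := fun h => hne (by simp [h])
      rcases hne'.lt_or_gt with h | h
      · exact of_decide_eq_false (hom β hβ β' hβ' h) ⟨congrArg Subtype.val hval.1, congrArg Subtype.val hval.2.1, congrArg Subtype.val hval.2.2⟩
      · exact of_decide_eq_false (hom β' hβ' β hβ h) ⟨(congrArg Subtype.val hval.1).symm, (congrArg Subtype.val hval.2.1).symm, (congrArg Subtype.val hval.2.2).symm⟩
    have hle := Cardinal.mk_le_of_injective htinj
    simp only [Cardinal.mk_prod, Ordinal.mk_Iio_ordinal, Cardinal.card_ord,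
      Cardinal.lift_id] at hle
    rw [hcard] at hle
    set m := (Order.succ χ) ⊔ ℵ₀ with hm
    have hminf : ℵ₀ ≤ m := le_sup_right
    have hbound : Cardinal.lift.{u+1} (Order.succ χ) *
        (Cardinal.lift.{u+1} (Order.succ χ) * Cardinal.lift.{u+1} χ) ≤
        Cardinal.lift.{u+1} m := by
      have h1 : Cardinal.lift.{u+1} (Order.succ χ) ≤ Cardinal.lift.{u+1} m :=
        Cardinal.lift_le.mpr le_sup_left
      have h2 : Cardinal.lift.{u+1} χ ≤ Cardinal.lift.{u+1} m :=
        Cardinal.lift_le.mpr ((Order.le_succ χ).trans le_sup_left)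
      calc Cardinal.lift.{u+1} (Order.succ χ) *
          (Cardinal.lift.{u+1} (Order.succ χ) * Cardinal.lift.{u+1} χ)
          ≤ Cardinal.lift.{u+1} m * (Cardinal.lift.{u+1} m * Cardinal.lift.{u+1} m) :=
            mul_le_mul' h1 (mul_le_mul' h1 h2)
        _ = Cardinal.lift.{u+1} m := by
            rw [Cardinal.mul_eq_self (Cardinal.aleph0_le_lift.mpr hminf),
              Cardinal.mul_eq_self (Cardinal.aleph0_le_lift.mpr hminf)]
    have hκm : κ ≤ m := Cardinal.lift_le.mp (hle.trans hbound)
    have hmκ : m < κ := sup_lt_iff.mpr ⟨hsucclt, hwc.1⟩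
    exact absurd hκm (not_le.mpr hmκ)

end
end

section
/- Let κ be a regular uncountable cardinal carrying a slim κ-Kurepa tree 𝒯 (each level β has cardinality at most |β|, with κ⁺ many cofinal branches, and assume |Lev_β(𝒯)| = |β| for all infinite β). Let S be the set of infinite cardinals below κ of cofinality ω, and for each β ∈ S fix a partition Lev_β(𝒯) = ⋃_{n<ω} I^β_n with |I^β_n| < β for each n. Fix distinct cofinal branches {b_α : α < κ⁺} and define c : κ⁺ × S → ω by c(α, β) = n iff the unique node of b_α at level β lies in I^β_n. Then there is no A ⊆ κ⁺ of order type κ and stationary T ⊆ S such that c is constant on A × T. -/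
open Cardinal Set Ordinal

noncomputable section

/-- `C` is a club (closed unbounded) subset of `κ`. -/
def ClubIn (κ : Ordinal) (C : Set Ordinal) : Prop :=
  C ⊆ Set.Iio κ ∧
  (∀ α < κ, ∃ β ∈ C, α < β) ∧
  (∀ δ, δ < κ → Order.IsSuccLimit δ → (∀ α < δ, ∃ β ∈ C, α < β ∧ β < δ) → δ ∈ C)

/-- `S` is a stationary subset of `κ`. -/
def StationaryIn (κ : Ordinal) (S : Set Ordinal) : Prop :=
  S ⊆ Set.Iio κ ∧ ∀ C, ClubIn κ C → (S ∩ C).Nonempty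

/-- Auxiliary: the set of closure points of a function `h` below a regular
uncountable cardinal is club. -/
lemma clubIn_closure_points (κ : Cardinal) (hreg : κ.IsRegular)
    (huncount : Cardinal.aleph0 < κ) (h : Ordinal → Ordinal) (hh : ∀ ξ < κ.ord, h ξ < κ.ord) :
    ClubIn κ.ord {δ | δ < κ.ord ∧ ∀ ξ < δ, h ξ < δ} := by
  have hcof : κ.ord.cof = κ := hreg.cof_eq
  have hlim : Order.IsSuccLimit κ.ord := Cardinal.isSuccLimit_ord hreg.aleph0_le
  refine ⟨fun δ hδ => hδ.1, ?_, ?_⟩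
  · intro α hα
    have step : ∀ x, x < κ.ord → ∃ y, x < y ∧ y < κ.ord ∧ ∀ ξ < x, h ξ < y := by
      intro x hx
      have hbound : (⨆ t : x.ToType, h ((@Ordinal.ToType.mk x).symm t : Ordinal))
          < κ.ord := by
        apply Ordinal.iSup_lt_ord
        · rw [Cardinal.mk_toType, hcof]; exact Cardinal.lt_ord.mp hx
        · intro t
          exact hh _ (lt_trans ((@Ordinal.ToType.mk x).symm t).2 hx)
      refine ⟨Order.succ (max (⨆ t : x.ToType,
          h ((@Ordinal.ToType.mk x).symm t : Ordinal)) x), ?_, ?_, ?_⟩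
      · exact lt_of_le_of_lt (le_max_right _ _) (Order.lt_succ _)
      · exact hlim.succ_lt (max_lt hbound hx)
      · intro ξ hξ
        have hle : h ξ ≤ ⨆ t : x.ToType,
            h ((@Ordinal.ToType.mk x).symm t : Ordinal) := by
          have h1 := Ordinal.le_iSup
            (fun t : x.ToType => h ((@Ordinal.ToType.mk x).symm t : Ordinal))
            ((@Ordinal.ToType.mk x) ⟨ξ, hξ⟩)
          simpa using h1
        exact lt_of_le_of_lt (hle.trans (le_max_left _ _)) (Order.lt_succ _)
    choose st hst1 hst2 hst3 using step
    let a : ℕ → {o : Ordinal // o < κ.ord} :=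
      fun k => Nat.rec ⟨Order.succ α, hlim.succ_lt hα⟩
        (fun _ p => ⟨st p.1 p.2, hst2 p.1 p.2⟩) k
    have ha_succ : ∀ k, (a (k + 1)).1 = st (a k).1 (a k).2 := fun _ => rfl
    have hδκ : (⨆ k, (a k).1) < κ.ord := by
      apply Ordinal.iSup_lt_ord_lift (f := fun k => (a k).1)
      · rw [Cardinal.mk_nat, Cardinal.lift_aleph0, hcof]; exact huncount
      · exact fun k => (a k).2
    refine ⟨⨆ k, (a k).1, ⟨hδκ, ?_⟩, ?_⟩
    · intro ξ hξ
      obtain ⟨k, hk⟩ := Ordinal.lt_iSup_iff.mp hξ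
      have : h ξ < (a (k + 1)).1 := by rw [ha_succ]; exact hst3 (a k).1 (a k).2 ξ hk
      exact this.trans_le (Ordinal.le_iSup (fun k => (a k).1) (k + 1))
    · have h0 : α < (a 0).1 := Order.lt_succ α
      exact h0.trans_le (Ordinal.le_iSup (fun k => (a k).1) 0)
  · intro δ hδκ _ hcl
    refine ⟨hδκ, ?_⟩
    intro ξ hξ
    obtain ⟨β, hβC, hξβ, hβδ⟩ := hcl ξ hξ
    exact lt_trans (hβC.2 ξ hξβ) hβδ

theorem stmt10 (κ : Cardinal) (hreg : κ.IsRegular) (huncount : Cardinal.aleph0 < κ)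
    (T : OrdTree κ.ord)
    (hκtree : ∀ β < κ.ord, #(T.Lev β) < κ)
    (hslim : ∀ β, Ordinal.omega0 ≤ β → β < κ.ord → #(T.Lev β) = β.card)
    -- the distinct cofinal branches
    (b : Ordinal → Set T.N)
    (hbr : ∀ α < (Order.succ κ).ord, T.IsBranch (b α))
    (hdist : ∀ α < (Order.succ κ).ord, ∀ α' < (Order.succ κ).ord, α ≠ α' → b α ≠ b α')
    -- `S` is the set of infinite cardinals below `κ` of cofinality `ω`
    (S : Set Ordinal)
    (hS : S = {β : Ordinal | β < κ.ord ∧ Ordinal.omega0 ≤ β ∧ β.card.ord = β ∧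
      β.cof = Cardinal.aleph0})
    -- for each `β ∈ S`, a partition of the level `β` into countably many small pieces
    (I : Ordinal → ℕ → Set T.N)
    (hIcover : ∀ β ∈ S, (⋃ n, I β n) = T.Lev β)
    (hIdisj : ∀ β ∈ S, ∀ m n : ℕ, m ≠ n → Disjoint (I β m) (I β n))
    (hIsmall : ∀ β ∈ S, ∀ n : ℕ, #(I β n) < β.card)
    -- the coloring: `c α β = n` iff the node of `b α` at level `β` lies in `I β n`
    (c : Ordinal → Ordinal → ℕ)
    (hc : ∀ α < (Order.succ κ).ord, ∀ β ∈ S, ∀ x ∈ b α, T.lev x = β → x ∈ I β (c α β)) :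
    ¬ ∃ A : Set Ordinal, A ⊆ Set.Iio (Order.succ κ).ord ∧ HasOtp A κ.ord ∧
      ∃ Tst : Set Ordinal, Tst ⊆ S ∧ StationaryIn κ.ord Tst ∧
        ∃ n : ℕ, ∀ α ∈ A, ∀ β ∈ Tst, c α β = n := by
  rintro ⟨A, hA, ⟨e, heMono, heRange⟩, Tst, hTsub, ⟨hTIio, hTstat⟩, n, hconst⟩
  have hcof : κ.ord.cof = κ := hreg.cof_eq
  have hℵ0 : Cardinal.aleph0 ≤ κ := hreg.aleph0_le
  have hlimord : Order.IsSuccLimit κ.ord := Cardinal.isSuccLimit_ord hℵ0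
  -- properties of elements of `Tst`
  have hTprop : ∀ β ∈ Tst, β < κ.ord ∧ Ordinal.omega0 ≤ β ∧ β.card.ord = β ∧
      β.cof = Cardinal.aleph0 := by
    intro β hβ
    have := hTsub hβ
    rw [hS] at this
    exact this
  have hIsm : ∀ β ∈ Tst, (#(I β n)).ord < β := by
    intro β hβ
    have h1 := hIsmall β (hTsub hβ) n
    have h2 := (hTprop β hβ).2.2.1
    calc (#(I β n)).ord < β.card.ord := Cardinal.ord_lt_ord.mpr h1
      _ = β := h2
  -- the node of branch `α` at level `β`
  have hnode : ∀ α, α < (Order.succ κ).ord → ∀ β, β < κ.ord →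
      ∃ x, x ∈ b α ∧ T.lev x = β := by
    intro α hα β hβ
    obtain ⟨x, hx1, hx2⟩ := (hbr α hα).2 β hβ
    exact ⟨x, hx1, hx2⟩
  choose nd ndmem ndlev using hnode
  -- uniqueness of nodes at a given level within a branch
  have huniq : ∀ α, α < (Order.succ κ).ord → ∀ x ∈ b α, ∀ y ∈ b α,
      T.lev x = T.lev y → x = y := by
    intro α hα x hx y hy hl
    rcases (hbr α hα).1 x hx y hy with hlt | heq | hlt
    · exact absurd (T.lt_lev hlt) (by rw [hl]; exact lt_irrefl _)
    · exact heq
    · exact absurd (T.lt_lev hlt) (by rw [hl]; exact lt_irrefl _)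
  -- comparability within a branch
  have hcomp : ∀ α, α < (Order.succ κ).ord → ∀ x ∈ b α, ∀ y ∈ b α,
      T.lev x < T.lev y → T.lt x y := by
    intro α hα x hx y hy hl
    rcases (hbr α hα).1 x hx y hy with hlt | heq | hlt
    · exact hlt
    · exact absurd (heq ▸ hl) (lt_irrefl _)
    · exact absurd (lt_trans (T.lt_lev hlt) hl) (lt_irrefl _)
  -- key splitting fact
  have key : ∀ α, ∀ hα : α < (Order.succ κ).ord, ∀ α', ∀ hα' : α' < (Order.succ κ).ord,
      ∀ x, x ∈ b α → x ∉ b α' → ∀ β, ∀ hβ : β < κ.ord, T.lev x ≤ β →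
      nd α hα β hβ ≠ nd α' hα' β hβ := by
    intro α hα α' hα' x hx hx' β hβ hlev heq
    have hy := ndmem α hα β hβ
    have hylev := ndlev α hα β hβ
    have hy' := ndmem α' hα' β hβ
    rcases eq_or_lt_of_le hlev with heql | hlt
    · -- x is the node of `b α` at level β
      have : x = nd α hα β hβ := huniq α hα x hx _ hy (by rw [hylev, heql])
      exact hx' (this ▸ heq ▸ hy')
    · -- x is strictly below level β
      have hxκ : T.lev x < κ.ord := T.lev_lt x
      have hx'' := ndmem α' hα' (T.lev x) hxκ
      have hx''lev := ndlev α' hα' (T.lev x) hxκ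
      have hltxy : T.lt x (nd α hα β hβ) :=
        hcomp α hα x hx _ hy (by rw [hylev]; exact hlt)
      have hltx'y : T.lt (nd α' hα' (T.lev x) hxκ) (nd α' hα' β hβ) :=
        hcomp α' hα' _ hx'' _ hy' (by rw [hx''lev, ndlev α' hα' β hβ]; exact hlt)
      obtain ⟨z, _, hzuniq⟩ :=
        T.exists_pred (nd α hα β hβ) (T.lev x) (by rw [hylev]; exact hlt)
      have h1 : x = z := hzuniq x ⟨hltxy, rfl⟩
      have h2 : nd α' hα' (T.lev x) hxκ = z := hzuniq _ ⟨heq ▸ hltx'y, hx''lev⟩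
      exact hx' ((h1.trans h2.symm) ▸ hx'')
  -- splitting levels
  have hsplit : ∀ α, ∀ hα : α < (Order.succ κ).ord, ∀ α', ∀ hα' : α' < (Order.succ κ).ord,
      ∃ γ, γ < κ.ord ∧ (b α ≠ b α' → ∀ β, ∀ hβ : β < κ.ord, γ ≤ β →
        nd α hα β hβ ≠ nd α' hα' β hβ) := by
    intro α hα α' hα'
    by_cases hne : b α = b α'
    · exact ⟨0, hlimord.pos, fun hcon => absurd hne hcon⟩
    · obtain ⟨x, hx⟩ := Set.symmDiff_nonempty.mpr hne
      rcases Set.mem_symmDiff.mp hx with ⟨h1, h2⟩ | ⟨h1, h2⟩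
      · exact ⟨T.lev x, T.lev_lt x, fun _ β hβ hγ => key α hα α' hα' x h1 h2 β hβ hγ⟩
      · exact ⟨T.lev x, T.lev_lt x, fun _ β hβ hγ =>
          (key α' hα' α hα x h1 h2 β hβ hγ).symm⟩
  by_cases hcase : ∃ ξ, ξ < κ.ord ∧ ∀ α < κ.ord, ∃ β ∈ Tst, α < β ∧ (#(I β n)).ord ≤ ξ
  · -- main argument: there are too many branches through a small set
    obtain ⟨ξ, hξκ, hub⟩ := hcase
    have hθκ : ξ.card < κ := Cardinal.lt_ord.mp hξκ
    obtain ⟨β₀, hβ₀T, hβ₀gt, -⟩ := hub ξ.card.ord (Cardinal.ord_lt_ord.mpr hθκ)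
    have hθβ₀ : ξ.card < β₀.card := by
      have h2 := (hTprop β₀ hβ₀T).2.2.1
      exact Cardinal.ord_lt_ord.mp (by rw [h2]; exact hβ₀gt)
    set σ : Cardinal := Order.succ ξ.card with hσdef
    have hσκ : σ < κ :=
      lt_of_le_of_lt (Order.succ_le_of_lt hθβ₀) (Cardinal.lt_ord.mp (hTprop β₀ hβ₀T).1)
    have hσordκ : σ.ord < κ.ord := Cardinal.ord_lt_ord.mpr hσκ
    have hmkι : #σ.ord.ToType = σ := by rw [Cardinal.mk_toType, Cardinal.card_ord]
    set idx : σ.ord.ToType → Ordinal :=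
      fun t => ((@Ordinal.ToType.mk σ.ord).symm t : Ordinal) with hidxdef
    have hidxlt : ∀ t, idx t < κ.ord :=
      fun t => lt_trans ((@Ordinal.ToType.mk σ.ord).symm t).2 hσordκ
    have hidxinj : Function.Injective idx := fun t t' h =>
      (@Ordinal.ToType.mk σ.ord).symm.injective (Subtype.ext h)
    set av : σ.ord.ToType → Ordinal := fun t => e ⟨idx t, hidxlt t⟩ with havdef
    have havA : ∀ t, av t ∈ A := fun t => heRange ▸ Set.mem_range_self _
    have havκ : ∀ t, av t < (Order.succ κ).ord := fun t => hA (havA t)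
    have havinj : Function.Injective av := by
      intro t t' h
      have h2 := heMono.injective h
      exact hidxinj (Subtype.mk_eq_mk.mp h2)
    choose γf hγf1 hγf2 using fun p : σ.ord.ToType × σ.ord.ToType =>
      hsplit (av p.1) (havκ p.1) (av p.2) (havκ p.2)
    have hΓ : (⨆ p, γf p) < κ.ord := by
      apply Ordinal.iSup_lt_ord _ hγf1
      rw [hcof]
      have : #(σ.ord.ToType × σ.ord.ToType) = σ * σ := by
        rw [Cardinal.mk_prod, hmkι]; simp
      rw [this]
      exact Cardinal.mul_lt_of_lt hℵ0 hσκ hσκ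
    obtain ⟨β, hβT, hβgt, hβsmall⟩ := hub (max (⨆ p, γf p) ξ) (max_lt hΓ hξκ)
    have hβκ : β < κ.ord := (hTprop β hβT).1
    have hβS : β ∈ S := hTsub hβT
    have hIθ : #(I β n) ≤ ξ.card := by
      have h2 := Ordinal.card_le_card hβsmall
      rwa [Cardinal.card_ord] at h2
    have hcn : ∀ t, c (av t) β = n := fun t => hconst (av t) (havA t) β hβT
    have hFmem : ∀ t, nd (av t) (havκ t) β hβκ ∈ I β n := by
      intro t
      have h2 := hc (av t) (havκ t) β hβS _ (ndmem (av t) (havκ t) β hβκ)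
        (ndlev (av t) (havκ t) β hβκ)
      rwa [hcn t] at h2
    set F : σ.ord.ToType → ↥(I β n) :=
      fun t => ⟨nd (av t) (havκ t) β hβκ, hFmem t⟩ with hFdef
    have hFinj : Function.Injective F := by
      intro t t' h
      by_contra hne
      have havne : av t ≠ av t' := fun hh => hne (havinj hh)
      have hbne : b (av t) ≠ b (av t') := hdist _ (havκ t) _ (havκ t') havne
      have hγβ : γf (t, t') ≤ β :=
        le_of_lt (lt_of_le_of_lt ((Ordinal.le_iSup γf (t, t')).trans (le_max_left _ _)) hβgt)
      exact hγf2 (t, t') hbne β hβκ hγβ (congrArg Subtype.val h)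
    have hcontra : σ ≤ ξ.card := by
      calc σ = #σ.ord.ToType := hmkι.symm
        _ ≤ #(I β n) := Cardinal.mk_le_of_injective hFinj
        _ ≤ ξ.card := hIθ
    exact absurd hcontra (not_le.mpr (Order.lt_succ ξ.card))
  · -- otherwise, `Tst` would avoid a club, contradicting stationarity
    push_neg at hcase
    choose hfn hfn1 hfn2 using hcase
    set h : Ordinal → Ordinal :=
      fun ξ => if hξ : ξ < κ.ord then hfn ξ hξ else 0 with hhdef
    have hh : ∀ ξ < κ.ord, h ξ < κ.ord := by
      intro ξ hξ
      rw [hhdef]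
      simp only [dif_pos hξ]
      exact hfn1 ξ hξ
    obtain ⟨β, hβT, hβκ, hβcl⟩ := hTstat _ (clubIn_closure_points κ hreg huncount h hh)
    have hξβ : (#(I β n)).ord < β := hIsm β hβT
    have hξκ : (#(I β n)).ord < κ.ord := lt_trans hξβ hβκ
    have hhβ : h (#(I β n)).ord < β := hβcl _ hξβ
    rw [hhdef] at hhβ
    simp only [dif_pos hξκ] at hhβ
    have := hfn2 _ hξκ β hβT hhβ
    exact absurd this (lt_irrefl _)

end
end

section
/- Let κ be an ineffable cardinal. Then there are no slim κ-Kurepa trees: every κ-tree with |Lev_β| ≤ |β| for all β < κ has at most κ many cofinal branches. -/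
open Cardinal Set Ordinal

noncomputable section

/-- `κ` is ineffable: every sequence `⟨A α ⊆ α : α < κ⟩` is coherently guessed
by a single `Z ⊆ κ` on a stationary set. -/
def IsIneffable (κ : Cardinal) : Prop :=
  Cardinal.aleph0 < κ ∧ κ.IsRegular ∧
  ∀ A : Ordinal → Set Ordinal, (∀ α < κ.ord, A α ⊆ Set.Iio α) →
    ∃ Z : Set Ordinal, Z ⊆ Set.Iio κ.ord ∧
      StationaryIn κ.ord {α | α < κ.ord ∧ Z ∩ Set.Iio α = A α}

section AuxLemmas

variable {κ : Cardinal.{0}}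

private lemma aux_omega_lt (h0 : ℵ₀ < κ) : (Ordinal.omega0 : Ordinal) < κ.ord := by
  rw [Cardinal.lt_ord, Ordinal.card_omega0]; exact h0

private lemma aux_ord_isLimit (hreg : κ.IsRegular) : Order.IsSuccLimit κ.ord :=
  Cardinal.isSuccLimit_ord hreg.aleph0_le

/-- inverse of the enumeration of `x.ToType` -/
private def ofToType (x : Ordinal) (t : x.ToType) : Ordinal :=
  (((Ordinal.ToType.mk (o := x))).symm t).1

private lemma ofToType_lt {x : Ordinal} (t : x.ToType) : ofToType x t < x :=
  (((Ordinal.ToType.mk (o := x))).symm t).2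

private lemma ofToType_enum {x a : Ordinal} (h : a < x) :
    ofToType x ((Ordinal.ToType.mk (o := x)) ⟨a, h⟩) = a := by
  simp [ofToType]

private lemma ofToType_inj {x : Ordinal} {t s : x.ToType}
    (h : ofToType x t = ofToType x s) : t = s :=
  ((Ordinal.ToType.mk (o := x))).symm.injective (Subtype.ext h)

/-- sups of increasing ω-sequences below a regular uncountable cardinal -/
private lemma aux_sup_limit (hreg : κ.IsRegular) (h0 : ℵ₀ < κ) {g : ℕ → Ordinal}
    (hlt : ∀ n, g n < κ.ord) (hmono : ∀ n, g n < g (n + 1)) :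
    (⨆ n, g n) < κ.ord ∧ Order.IsSuccLimit (⨆ n, g n) ∧ ∀ n, g n < ⨆ n, g n := by
  have hcof : κ.ord.cof = κ := hreg.cof_eq
  have hsup : (⨆ n, g n) < κ.ord := by
    refine Ordinal.iSup_lt_ord (f := g) ?_ hlt
    rw [hcof, Cardinal.mk_nat]; exact h0
  have hle : ∀ n, g n < ⨆ n, g n := fun n =>
    lt_of_lt_of_le (hmono n) (Ordinal.le_iSup g (n + 1))
  refine ⟨hsup, Ordinal.isSuccLimit_iff.mpr ⟨?_, Order.isSuccPrelimit_iff_succ_lt.mpr ?_⟩, hle⟩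
  · intro h
    have := hle 0
    rw [h] at this
    exact absurd this (not_lt_of_ge zero_le)
  · intro a ha
    obtain ⟨n, hn⟩ := Ordinal.lt_iSup_iff.mp ha
    exact lt_of_le_of_lt (Order.succ_le_of_lt hn) (hle n)

/-- the closure points of a binary ordinal operation form a club (together with
being a limit ordinal above ω). -/
private lemma aux_club_closure (hreg : κ.IsRegular) (h0 : ℵ₀ < κ)
    (F : Ordinal → Ordinal → Ordinal)
    (hF : ∀ a, a < κ.ord → ∀ b, b < κ.ord → F a b < κ.ord) :
    ClubIn κ.ord {α | α < κ.ord ∧ Order.IsSuccLimit α ∧ Ordinal.omega0 < α ∧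
      ∀ a, a < α → ∀ b, b < α → F a b < α} := by
  have hΩ := aux_ord_isLimit hreg
  have hcof : κ.ord.cof = κ := hreg.cof_eq
  refine ⟨fun α hα => hα.1, ?_, ?_⟩
  · -- unboundedness
    intro α hα
    have step : ∀ x, x < κ.ord →
        ∃ y, y < κ.ord ∧ x < y ∧ ∀ a, a < x → ∀ b, b < x → F a b < y := by
      intro x hx
      set s : Ordinal :=
        ⨆ yz : x.ToType × x.ToType, (F (ofToType x yz.1) (ofToType x yz.2) + 1) with hs
      have hslt : s < κ.ord := by
        refine Ordinal.iSup_lt_ord ?_ ?_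
        · rw [hcof]
          have : #(x.ToType × x.ToType) = x.card * x.card := by
            simp [Cardinal.mk_prod, Cardinal.mk_toType]
          rw [this]
          exact Cardinal.mul_lt_of_lt hreg.aleph0_le (Cardinal.lt_ord.mp hx)
            (Cardinal.lt_ord.mp hx)
        · intro yz
          rw [Ordinal.add_one_eq_succ]
          exact hΩ.succ_lt (hF _ (lt_trans (ofToType_lt _) hx) _
            (lt_trans (ofToType_lt _) hx))
      refine ⟨max s (x + 1), ?_, ?_, ?_⟩
      · refine max_lt hslt ?_
        rw [Ordinal.add_one_eq_succ]; exact hΩ.succ_lt hx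
      · exact lt_of_lt_of_le (by rw [Ordinal.add_one_eq_succ]; exact Order.lt_succ x)
          (le_max_right _ _)
      · intro a ha b hb
        have hle : F a b + 1 ≤ s := by
          have := Ordinal.le_iSup
            (fun yz : x.ToType × x.ToType =>
              F (ofToType x yz.1) (ofToType x yz.2) + 1)
            (⟨(Ordinal.ToType.mk (o := x)) ⟨a, ha⟩, (Ordinal.ToType.mk (o := x)) ⟨b, hb⟩⟩)
          rw [ofToType_enum ha, ofToType_enum hb] at this
          exact this
        have h1 : F a b < F a b + 1 := by
          rw [Ordinal.add_one_eq_succ]; exact Order.lt_succ _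
        exact lt_of_lt_of_le h1 (le_trans hle (le_max_left _ _))
    have step' : ∀ x, ∃ y, x < κ.ord →
        (y < κ.ord ∧ x < y ∧ ∀ a, a < x → ∀ b, b < x → F a b < y) := by
      intro x
      by_cases hx : x < κ.ord
      · exact (step x hx).imp fun y hy => fun _ => hy
      · exact ⟨0, fun hh => absurd hh hx⟩
    choose g hg using step'
    set cseq : ℕ → Ordinal :=
      fun n => Nat.rec (max (α + 1) (Ordinal.omega0 + 1)) (fun _ ih => g ih) n with hcseq
    have hc0 : cseq 0 = max (α + 1) (Ordinal.omega0 + 1) := rfl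
    have hcsucc : ∀ n, cseq (n + 1) = g (cseq n) := fun n => rfl
    have hlt : ∀ n, cseq n < κ.ord := by
      intro n
      induction n with
      | zero =>
        rw [hc0]
        refine max_lt ?_ ?_
        · rw [Ordinal.add_one_eq_succ]; exact hΩ.succ_lt hα
        · rw [Ordinal.add_one_eq_succ]; exact hΩ.succ_lt (aux_omega_lt h0)
      | succ n ih =>
        rw [hcsucc]; exact (hg _ ih).1
    have hmono : ∀ n, cseq n < cseq (n + 1) := by
      intro n; rw [hcsucc]; exact (hg _ (hlt n)).2.1
    obtain ⟨hδΩ, hδlim, hle⟩ := aux_sup_limit hreg h0 hlt hmono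
    set δ := ⨆ n, cseq n with hδ
    refine ⟨δ, ⟨hδΩ, hδlim, ?_, ?_⟩, ?_⟩
    · refine lt_trans ?_ (hle 0)
      rw [hc0]
      refine lt_of_lt_of_le ?_ (le_max_right _ _)
      rw [Ordinal.add_one_eq_succ]; exact Order.lt_succ _
    · intro a ha b hb
      obtain ⟨m, hm⟩ := Ordinal.lt_iSup_iff.mp ha
      obtain ⟨l, hl⟩ := Ordinal.lt_iSup_iff.mp hb
      have hmono' : StrictMono cseq := strictMono_nat_of_lt_succ hmono
      have ha' : a < cseq (max m l) := lt_of_lt_of_le hm (hmono'.monotone (le_max_left _ _))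
      have hb' : b < cseq (max m l) := lt_of_lt_of_le hl (hmono'.monotone (le_max_right _ _))
      have hF' : F a b < cseq (max m l + 1) := by
        rw [hcsucc]; exact (hg _ (hlt _)).2.2 a ha' b hb'
      exact lt_trans hF' (hle (max m l + 1))
    · refine lt_trans ?_ (hle 0)
      rw [hc0]
      refine lt_of_lt_of_le ?_ (le_max_left _ _)
      rw [Ordinal.add_one_eq_succ]; exact Order.lt_succ _
  · -- closedness
    intro δ hδΩ hδlim hap
    refine ⟨hδΩ, hδlim, ?_, ?_⟩
    · obtain ⟨β, hβmem, -, hβδ⟩ := hap 0 hδlim.pos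
      exact lt_trans hβmem.2.2.1 hβδ
    · intro a ha b hb
      obtain ⟨β, hβmem, hβ1, hβ2⟩ := hap (max a b) (max_lt ha hb)
      exact lt_trans (hβmem.2.2.2 a (lt_of_le_of_lt (le_max_left _ _) hβ1) b
        (lt_of_le_of_lt (le_max_right _ _) hβ1)) hβ2

private lemma aux_club_inter (hreg : κ.IsRegular) (h0 : ℵ₀ < κ) {C D : Set Ordinal}
    (hC : ClubIn κ.ord C) (hD : ClubIn κ.ord D) : ClubIn κ.ord (C ∩ D) := by
  refine ⟨fun β hβ => hC.1 hβ.1, ?_, ?_⟩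
  · intro α hα
    have hCc : ∀ x, ∃ y, x < κ.ord → (y ∈ C ∧ x < y) := by
      intro x
      by_cases hx : x < κ.ord
      · exact (hC.2.1 x hx).imp fun y hy => fun _ => hy
      · exact ⟨0, fun hh => absurd hh hx⟩
    have hDc : ∀ x, ∃ y, x < κ.ord → (y ∈ D ∧ x < y) := by
      intro x
      by_cases hx : x < κ.ord
      · exact (hD.2.1 x hx).imp fun y hy => fun _ => hy
      · exact ⟨0, fun hh => absurd hh hx⟩
    choose fC hfC using hCc
    choose fD hfD using hDc
    have hstep : ∀ x, x < κ.ord →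
        x < fC x ∧ fC x ∈ C ∧ fC x < κ.ord ∧
          fC x < fD (fC x) ∧ fD (fC x) ∈ D ∧ fD (fC x) < κ.ord := by
      intro x hx
      have h1 := hfC x hx
      have h1Ω : fC x < κ.ord := hC.1 h1.1
      have h2 := hfD _ h1Ω
      exact ⟨h1.2, h1.1, h1Ω, h2.2, h2.1, hD.1 h2.1⟩
    set gseq : ℕ → Ordinal := fun n => Nat.rec α (fun _ ih => fD (fC ih)) n with hgseq
    have hg0 : gseq 0 = α := rfl
    have hgsucc : ∀ n, gseq (n + 1) = fD (fC (gseq n)) := fun n => rfl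
    have hglt : ∀ n, gseq n < κ.ord := by
      intro n
      induction n with
      | zero => exact hα
      | succ n ih => rw [hgsucc]; exact (hstep _ ih).2.2.2.2.2
    have hgmono : ∀ n, gseq n < gseq (n + 1) := by
      intro n
      rw [hgsucc]
      exact lt_trans (hstep _ (hglt n)).1 (hstep _ (hglt n)).2.2.2.1
    obtain ⟨hδΩ, hδlim, hle⟩ := aux_sup_limit hreg h0 hglt hgmono
    set δ := ⨆ n, gseq n with hδ
    have hδC : δ ∈ C := by
      refine hC.2.2 δ hδΩ hδlim ?_
      intro a ha
      obtain ⟨n, hn⟩ := Ordinal.lt_iSup_iff.mp ha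
      refine ⟨fC (gseq n), (hstep _ (hglt n)).2.1, lt_trans hn (hstep _ (hglt n)).1, ?_⟩
      have h5 : fD (fC (gseq n)) < δ := by rw [← hgsucc n]; exact hle (n + 1)
      exact lt_trans (hstep _ (hglt n)).2.2.2.1 h5
    have hδD : δ ∈ D := by
      refine hD.2.2 δ hδΩ hδlim ?_
      intro a ha
      obtain ⟨n, hn⟩ := Ordinal.lt_iSup_iff.mp ha
      refine ⟨gseq (n + 1), by rw [hgsucc]; exact (hstep _ (hglt n)).2.2.2.2.1,
        lt_trans hn (lt_of_lt_of_le (hgmono n) (le_refl _)), hle (n + 1)⟩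
    exact ⟨δ, ⟨hδC, hδD⟩, lt_of_lt_of_le (lt_of_lt_of_le (lt_of_le_of_lt (le_refl α) (hgmono 0)) (le_refl _)) (le_of_lt (hle 1))⟩
  · intro δ hδΩ hδlim hap
    constructor
    · exact hC.2.2 δ hδΩ hδlim fun a ha =>
        (hap a ha).imp fun β hβ => ⟨hβ.1.1, hβ.2⟩
    · exact hD.2.2 δ hδΩ hδlim fun a ha =>
        (hap a ha).imp fun β hβ => ⟨hβ.1.2, hβ.2⟩

private lemma aux_stat_inter (hreg : κ.IsRegular) (h0 : ℵ₀ < κ) {S D : Set Ordinal}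
    (hS : StationaryIn κ.ord S) (hD : ClubIn κ.ord D) : StationaryIn κ.ord (S ∩ D) := by
  refine ⟨fun x hx => hS.1 hx.1, fun C hC => ?_⟩
  obtain ⟨x, hxS, hxD, hxC⟩ := hS.2 (D ∩ C) (aux_club_inter hreg h0 hD hC)
  exact ⟨x, ⟨hxS, hxD⟩, hxC⟩

/-- weak Fodor: a regressive function on a stationary set is constant on an unbounded set -/
private lemma aux_fodor (hreg : κ.IsRegular) (h0 : ℵ₀ < κ) {S : Set Ordinal}
    (hS : StationaryIn κ.ord S) (f : Ordinal → Ordinal) (hf : ∀ α ∈ S, f α < α) :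
    ∃ i, ∀ η, η < κ.ord → ∃ α ∈ S, η < α ∧ f α = i := by
  have hΩ := aux_ord_isLimit hreg
  have hcof : κ.ord.cof = κ := hreg.cof_eq
  have h1 : ∃ γ, γ < κ.ord ∧ ∀ η, η < κ.ord → ∃ α ∈ S, η < α ∧ f α < γ := by
    by_contra hcon
    push_neg at hcon
    -- hcon : ∀ γ, γ < κ.ord → ∃ η, η < κ.ord ∧ ∀ α ∈ S, η < α → γ ≤ f α
    have hsk : ∀ γ, ∃ η, γ < κ.ord → (η < κ.ord ∧ ∀ α ∈ S, η < α → γ ≤ f α) := by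
      intro γ
      by_cases hγ : γ < κ.ord
      · exact (hcon γ hγ).imp fun η hη => fun _ => hη
      · exact ⟨0, fun hh => absurd hh hγ⟩
    choose h' hh' using hsk
    have hclub := aux_club_closure hreg h0 (fun a _ => h' a)
      (fun a ha b _ => (hh' a ha).1)
    obtain ⟨α, hαS, hαmem⟩ := hS.2 _ hclub
    obtain ⟨hαΩ, hαlim, hαω, hαcl⟩ := hαmem
    have hfα := hf α hαS
    have hγlt : Order.succ (f α) < α := hαlim.succ_lt hfα
    have hγΩ : Order.succ (f α) < κ.ord := lt_trans hγlt hαΩ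
    have h'lt : h' (Order.succ (f α)) < α := hαcl _ hγlt 0 hαlim.pos
    have hle := (hh' _ hγΩ).2 α hαS h'lt
    exact absurd (lt_of_lt_of_le (Order.lt_succ (f α)) hle) (lt_irrefl _)
  obtain ⟨γ, hγΩ, hγ⟩ := h1
  by_contra hcon2
  push_neg at hcon2
  -- hcon2 : ∀ i, ∃ η, η < κ.ord ∧ ∀ α ∈ S, η < α → f α ≠ i
  have hsk2 : ∀ i, ∃ η, η < κ.ord ∧ ∀ α ∈ S, η < α → f α ≠ i := hcon2
  choose m hm using hsk2
  have hMΩ : (⨆ t : γ.ToType, m (ofToType γ t)) < κ.ord := by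
    refine Ordinal.iSup_lt_ord ?_ (fun t => (hm _).1)
    rw [hcof, Cardinal.mk_toType]
    exact Cardinal.lt_ord.mp hγΩ
  obtain ⟨α, hαS, hMα, hfαγ⟩ := hγ _ hMΩ
  have hmle : m (f α) ≤ ⨆ t : γ.ToType, m (ofToType γ t) := by
    have := Ordinal.le_iSup (fun t : γ.ToType => m (ofToType γ t))
      ((Ordinal.ToType.mk (o := γ)) ⟨f α, hfαγ⟩)
    rwa [ofToType_enum hfαγ] at this
  exact (hm (f α)).2 α hαS (lt_of_le_of_lt hmle hMα) rfl

/-- a Gödel-style pairing function below `κ.ord`. -/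
private lemma aux_pairing (hreg : κ.IsRegular) (h0 : ℵ₀ < κ) :
    ∃ p : Ordinal → Ordinal → Ordinal,
      (∀ a b, a < κ.ord → b < κ.ord → p a b < κ.ord) ∧
      (∀ a b, a < κ.ord → b < κ.ord → a ≤ p a b ∧ b ≤ p a b) ∧
      (∀ a b a' b', a < κ.ord → b < κ.ord → a' < κ.ord → b' < κ.ord →
        p a b = p a' b' → a = a' ∧ b = b') := by
  have hΩ := aux_ord_isLimit hreg
  set Ω := κ.ord with hΩdef
  set ι : Ω.ToType → Ordinal := ofToType Ω with hι
  set k : Ω.ToType × Ω.ToType → Ordinal ×ₗ (Ordinal ×ₗ Ordinal) :=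
    fun y => toLex (max (ι y.1) (ι y.2), toLex (ι y.1, ι y.2)) with hk
  have kinj : Function.Injective k := by
    intro y z h
    have h' : (max (ι y.1) (ι y.2), toLex (ι y.1, ι y.2)) =
        (max (ι z.1) (ι z.2), toLex (ι z.1, ι z.2)) := toLex.injective h
    have h2 : toLex ((ι y.1, ι y.2)) = toLex ((ι z.1, ι z.2)) := congrArg Prod.snd h'
    have h3 : (ι y.1, ι y.2) = (ι z.1, ι z.2) := toLex.injective h2
    have h4 : ι y.1 = ι z.1 := congrArg Prod.fst h3
    have h5 : ι y.2 = ι z.2 := congrArg Prod.snd h3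
    exact Prod.ext (ofToType_inj h4) (ofToType_inj h5)
  set r : Ω.ToType × Ω.ToType → Ω.ToType × Ω.ToType → Prop :=
    fun y z => k y < k z with hr
  have hrdef : ∀ y z, r y z ↔
      (max (ι y.1) (ι y.2) < max (ι z.1) (ι z.2) ∨
       (max (ι y.1) (ι y.2) = max (ι z.1) (ι z.2) ∧
        (ι y.1 < ι z.1 ∨ (ι y.1 = ι z.1 ∧ ι y.2 < ι z.2)))) := by
    intro y z
    rw [hr]
    show k y < k z ↔ _
    rw [hk]
    show toLex _ < toLex _ ↔ _
    rw [Prod.Lex.lt_iff]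
    constructor
    · rintro (h | ⟨h1, h2⟩)
      · exact Or.inl h
      · refine Or.inr ⟨h1, ?_⟩
        rw [Prod.Lex.lt_iff] at h2
        exact h2
    · rintro (h | ⟨h1, h2⟩)
      · exact Or.inl h
      · refine Or.inr ⟨h1, ?_⟩
        rw [Prod.Lex.lt_iff]
        exact h2
  haveI hwo : IsWellOrder (Ω.ToType × Ω.ToType) r :=
    { trichotomous := by
        intro y z h1 h2
        rcases lt_trichotomy (k y) (k z) with h | h | h
        · exact absurd h h1
        · exact kinj h
        · exact absurd h h2
      wf := InvImage.wf k wellFounded_lt }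
  set q : Ordinal → Ordinal → Ordinal := fun a b =>
    if h : a < Ω ∧ b < Ω then
      Ordinal.typein r ((Ordinal.ToType.mk (o := Ω)) ⟨a, h.1⟩, (Ordinal.ToType.mk (o := Ω)) ⟨b, h.2⟩)
    else 0 with hq
  have hιe : ∀ (a : Ordinal) (h : a < Ω), ι ((Ordinal.ToType.mk (o := Ω)) ⟨a, h⟩) = a :=
    fun a h => ofToType_enum h
  have qval : ∀ a b (ha : a < Ω) (hb : b < Ω),
      q a b = Ordinal.typein r
        ((Ordinal.ToType.mk (o := Ω)) ⟨a, ha⟩, (Ordinal.ToType.mk (o := Ω)) ⟨b, hb⟩) := by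
    intro a b ha hb
    rw [hq]
    exact dif_pos ⟨ha, hb⟩
  -- values below Ω
  have hq2 : ∀ a b, a < Ω → b < Ω → q a b < Ω := by
    intro a b ha hb
    refine Cardinal.lt_ord.mpr ?_
    rw [qval a b ha hb, Ordinal.card_typein]
    set x : Ω.ToType × Ω.ToType :=
      ((Ordinal.ToType.mk (o := Ω)) ⟨a, ha⟩, (Ordinal.ToType.mk (o := Ω)) ⟨b, hb⟩) with hx
    have hmb : ∀ y : {y // r y x}, ι y.1.1 < max a b + 1 ∧ ι y.1.2 < max a b + 1 := by
      rintro ⟨y, hy⟩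
      rw [hrdef] at hy
      have hx1 : ι x.1 = a := hιe a ha
      have hx2 : ι x.2 = b := hιe b hb
      have hmax : max (ι y.1) (ι y.2) ≤ max a b := by
        rcases hy with h | ⟨h1, -⟩
        · rw [hx1, hx2] at h; exact le_of_lt h
        · rw [hx1, hx2] at h1; exact le_of_eq h1
      constructor
      · exact lt_of_le_of_lt (le_trans (le_max_left _ _) hmax)
          (by rw [Ordinal.add_one_eq_succ]; exact Order.lt_succ _)
      · exact lt_of_le_of_lt (le_trans (le_max_right _ _) hmax)
          (by rw [Ordinal.add_one_eq_succ]; exact Order.lt_succ _)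
    set e : {y // r y x} → (max a b + 1).ToType × (max a b + 1).ToType := fun y =>
      ((Ordinal.ToType.mk (o := _)) ⟨ι y.1.1, (hmb y).1⟩,
       (Ordinal.ToType.mk (o := _)) ⟨ι y.1.2, (hmb y).2⟩) with he
    have heinj : Function.Injective e := by
      intro y z h
      rw [he] at h
      have h1 := congrArg Prod.fst h
      have h2 := congrArg Prod.snd h
      simp only at h1 h2
      have h1' := congrArg Subtype.val (((Ordinal.ToType.mk (o := (max a b + 1)))).injective h1)
      have h2' := congrArg Subtype.val (((Ordinal.ToType.mk (o := (max a b + 1)))).injective h2)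
      exact Subtype.ext (Prod.ext (ofToType_inj h1') (ofToType_inj h2'))
    have hm1 : max a b + 1 < Ω := by
      rw [Ordinal.add_one_eq_succ]; exact hΩ.succ_lt (max_lt ha hb)
    calc #{y // r y x} ≤ #((max a b + 1).ToType × (max a b + 1).ToType) :=
          Cardinal.mk_le_of_injective heinj
      _ = (max a b + 1).card * (max a b + 1).card := by
          simp [Cardinal.mk_prod, Cardinal.mk_toType]
      _ < κ := Cardinal.mul_lt_of_lt hreg.aleph0_le (Cardinal.lt_ord.mp hm1)
          (Cardinal.lt_ord.mp hm1)
  have h0Ω : (0 : Ordinal) < Ω := hΩ.pos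
  -- typein dominates the coordinates
  have key3 : ∀ δ, δ < Ω → δ ≤ q δ 0 := by
    intro δ
    induction δ using Ordinal.induction with
    | h δ IH =>
      intro hδ
      refine le_of_forall_lt fun c hc => ?_
      have hcΩ : c < Ω := lt_trans hc hδ
      have hlt : q c 0 < q δ 0 := by
        rw [qval c 0 hcΩ h0Ω, qval δ 0 hδ h0Ω, Ordinal.typein_lt_typein, hrdef]
        left
        rw [hιe c hcΩ, hιe δ hδ, hιe 0 h0Ω]
        simpa [max_eq_left zero_le] using hc
      exact lt_of_le_of_lt (IH c hc hcΩ) hlt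
  have hq3 : ∀ a b, a < Ω → b < Ω → a ≤ q a b ∧ b ≤ q a b := by
    intro a b ha hb
    have hmle : max a b ≤ q a b := by
      refine le_of_forall_lt fun c hc => ?_
      have hcΩ : c < Ω := lt_trans hc (max_lt ha hb)
      have hlt : q c 0 < q a b := by
        rw [qval c 0 hcΩ h0Ω, qval a b ha hb, Ordinal.typein_lt_typein, hrdef]
        left
        rw [hιe c hcΩ, hιe 0 h0Ω, hιe a ha, hιe b hb]
        simpa [max_eq_left zero_le] using hc
      exact lt_of_le_of_lt (key3 c hcΩ) hlt
    exact ⟨le_trans (le_max_left a b) hmle, le_trans (le_max_right a b) hmle⟩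
  have hq1 : ∀ a b a' b', a < Ω → b < Ω → a' < Ω → b' < Ω →
      q a b = q a' b' → a = a' ∧ b = b' := by
    intro a b a' b' ha hb ha' hb' h
    rw [qval a b ha hb, qval a' b' ha' hb'] at h
    have h2 := Ordinal.typein_injective r h
    have h3 := congrArg Prod.fst h2
    have h4 := congrArg Prod.snd h2
    simp only at h3 h4
    constructor
    · have := congrArg Subtype.val (((Ordinal.ToType.mk (o := Ω))).injective h3)
      simpa using this
    · have := congrArg Subtype.val (((Ordinal.ToType.mk (o := Ω))).injective h4)
      simpa using this
  exact ⟨q, hq2, hq3, hq1⟩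

end AuxLemmas

/-- An ineffable cardinal carries no slim `κ`-Kurepa tree: every slim `κ`-tree
has at most `κ` cofinal branches. -/
theorem stmt17 (κ : Cardinal) (hineff : IsIneffable κ)
    (T : OrdTree κ.ord)
    (hκtree : ∀ β < κ.ord, #(T.Lev β) < κ)
    (hslim : ∀ β, Ordinal.omega0 ≤ β → β < κ.ord → #(T.Lev β) ≤ β.card) :
    #{b : Set T.N // T.IsBranch b} ≤ κ := by
  obtain ⟨h0, hreg, hineff3⟩ := hineff
  have hΩ : Order.IsSuccLimit κ.ord := aux_ord_isLimit hreg
  -- the node of a branch at a given level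
  have hndex : ∀ (b : {b : Set T.N // T.IsBranch b}) (β : Ordinal),
      ∃ x : T.N, β < κ.ord → (x ∈ b.1 ∧ T.lev x = β) := by
    intro b β
    by_cases h : β < κ.ord
    · obtain ⟨x, hx1, hx2⟩ := b.2.2 β h
      exact ⟨x, fun _ => ⟨hx1, hx2⟩⟩
    · obtain ⟨x, -⟩ := T.lev_surj 0 hΩ.pos
      exact ⟨x, fun hh => absurd hh h⟩
  choose nd hnd using hndex
  have hnd1 : ∀ b β, β < κ.ord → nd b β ∈ b.1 := fun b β h => (hnd b β h).1
  have hnd2 : ∀ b β, β < κ.ord → T.lev (nd b β) = β := fun b β h => (hnd b β h).2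
  have huniq : ∀ (b : {b : Set T.N // T.IsBranch b}) x y,
      x ∈ b.1 → y ∈ b.1 → T.lev x = T.lev y → x = y := by
    intro b x y hx hy he
    rcases b.2.1 x hx y hy with h | h | h
    · exact absurd (he ▸ T.lt_lev h) (lt_irrefl _)
    · exact h
    · exact absurd (he ▸ T.lt_lev h) (lt_irrefl _)
  have hmemnd : ∀ b x (β : Ordinal), β < κ.ord → x ∈ b.1 → T.lev x = β → x = nd b β :=
    fun b x β h hx hl =>
      huniq b x (nd b β) hx (hnd1 b β h) (by rw [hl, hnd2 b β h])
  have hltnd : ∀ b β γ, β < γ → γ < κ.ord → T.lt (nd b β) (nd b γ) := by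
    intro b β γ hβγ hγ
    have hβ : β < κ.ord := lt_trans hβγ hγ
    rcases b.2.1 _ (hnd1 b β hβ) _ (hnd1 b γ hγ) with h | h | h
    · exact h
    · exfalso
      have := congrArg T.lev h
      rw [hnd2 b β hβ, hnd2 b γ hγ] at this
      exact absurd this (ne_of_lt hβγ)
    · exfalso
      have := T.lt_lev h
      rw [hnd2 b β hβ, hnd2 b γ hγ] at this
      exact absurd this (not_lt_of_gt hβγ)
  have hprednd : ∀ b (γ : Ordinal), γ < κ.ord → ∀ y, T.lt y (nd b γ) → T.lev y < γ →
      y = nd b (T.lev y) := by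
    intro b γ hγ y hy hl
    have hlev : T.lev y < T.lev (nd b γ) := by rw [hnd2 b γ hγ]; exact hl
    obtain ⟨z, hz, huz⟩ := T.exists_pred (nd b γ) (T.lev y) hlev
    have h1 : y = z := huz y ⟨hy, rfl⟩
    have h2 : nd b (T.lev y) = z :=
      huz _ ⟨hltnd b _ γ hl hγ, hnd2 b _ (lt_trans hl hγ)⟩
    rw [h2]
    exact h1
  have hext : ∀ b b' : {b : Set T.N // T.IsBranch b},
      (∀ β, Ordinal.omega0 ≤ β → β < κ.ord → nd b β = nd b' β) → b = b' := by
    have key : ∀ b b' : {b : Set T.N // T.IsBranch b},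
        (∀ β, Ordinal.omega0 ≤ β → β < κ.ord → nd b β = nd b' β) → b.1 ⊆ b'.1 := by
      intro b b' hagree x hx
      have hlamW : T.lev x < κ.ord := T.lev_lt x
      set β := T.lev x + Ordinal.omega0 with hβ
      have hβΩ : β < κ.ord :=
        Ordinal.isPrincipal_add_ord hreg.aleph0_le hlamW (aux_omega_lt h0)
      have hωβ : Ordinal.omega0 ≤ β := le_add_self
      have hlamb : T.lev x < β := by
        have h1 : T.lev x + 0 < T.lev x + Ordinal.omega0 :=
          (add_lt_add_iff_left _).mpr Ordinal.omega0_pos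
        rw [add_zero] at h1
        exact h1
      have hxnd : x = nd b (T.lev x) := hmemnd b x (T.lev x) hlamW hx rfl
      have hlt : T.lt x (nd b' β) := by
        rw [← hagree β hωβ hβΩ, hxnd]
        exact hltnd b (T.lev x) β hlamb hβΩ
      have hx' : x = nd b' (T.lev x) := hprednd b' β hβΩ x hlt hlamb
      rw [hx']
      exact hnd1 b' (T.lev x) hlamW
    intro b b' h
    exact Subtype.ext (Set.Subset.antisymm (key b b' h)
      (key b' b fun β h1 h2 => (h β h1 h2).symm))
  -- level labelling function
  have hEex : ∀ β : Ordinal, ∃ e : T.N → Ordinal,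
      (Ordinal.omega0 ≤ β → ∀ x, T.lev x = β → e x < β) ∧
      (Ordinal.omega0 ≤ β → ∀ x y, T.lev x = β → T.lev y = β → e x = e y → x = y) := by
    intro β
    by_cases h : Ordinal.omega0 ≤ β ∧ β < κ.ord
    · have hcard : #(T.Lev β) ≤ β.card := hslim β h.1 h.2
      have hne : Nonempty (↥(T.Lev β) ↪ ↥(Set.Iio β)) := by
        rw [← Cardinal.lift_mk_le', Ordinal.mk_Iio_ordinal, Cardinal.lift_lift]
        exact Cardinal.lift_le.mpr hcard
      obtain ⟨f⟩ := hne
      refine ⟨fun x => if hx : T.lev x = β then (f ⟨x, hx⟩).1 else 0, ?_, ?_⟩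
      · intro _ x hx
        dsimp only
        rw [dif_pos hx]
        exact (f ⟨x, hx⟩).2
      · intro _ x y hx hy he
        dsimp only at he
        rw [dif_pos hx, dif_pos hy] at he
        have := f.injective (Subtype.ext he)
        exact congrArg Subtype.val this
    · refine ⟨fun _ => 0, ?_, ?_⟩
      · intro hω x hx
        exact absurd ⟨hω, hx ▸ T.lev_lt x⟩ h
      · intro hω x y hx hy _
        exact absurd ⟨hω, hx ▸ T.lev_lt x⟩ h
  choose e he1 he2 using hEex
  set E : T.N → Ordinal := fun x => e (T.lev x) x with hE
  have hE1 : ∀ x, Ordinal.omega0 ≤ T.lev x → E x < T.lev x := fun x hω =>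
    he1 _ hω x rfl
  have hE2 : ∀ x y, Ordinal.omega0 ≤ T.lev x → T.lev x = T.lev y → E x = E y → x = y := by
    intro x y hω hl he'
    refine he2 (T.lev x) hω x y rfl hl.symm ?_
    have : e (T.lev y) y = e (T.lev x) y := by rw [hl]
    rw [hE] at he'
    simp only at he'
    rw [this] at he'
    exact he'
  obtain ⟨p, hp2, hp3, hp1⟩ := aux_pairing hreg h0
  have hEnd : ∀ b β, Ordinal.omega0 ≤ β → β < κ.ord → E (nd b β) < β := by
    intro b β hω hβ
    have := hE1 (nd b β) (by rw [hnd2 b β hβ]; exact hω)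
    rwa [hnd2 b β hβ] at this
  set Z : {b : Set T.N // T.IsBranch b} → Set Ordinal := fun b =>
    {γ | ∃ β, Ordinal.omega0 ≤ β ∧ ∃ _ : β < κ.ord, γ = p β (E (nd b β))} with hZ
  set c : Ordinal → T.N → Set Ordinal := fun α x =>
    {δ | ∃ β y, Ordinal.omega0 ≤ β ∧ β < α ∧ T.lt y x ∧ T.lev y = β ∧ δ = p β (E y)} with hc
  set A : Ordinal → Set Ordinal := fun α =>
    {δ | δ < α ∧ ∃ x γ, T.lev x = α ∧ γ ∈ c α x ∧ δ = p (E x) γ} with hA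
  obtain ⟨W, hWsub, hWstat⟩ := hineff3 A (fun α _ δ hδ => hδ.1)
  have hD := aux_club_closure hreg h0 p fun a ha b hb => hp2 a b ha hb
  set D : Set Ordinal := {α | α < κ.ord ∧ Order.IsSuccLimit α ∧ Ordinal.omega0 < α ∧
    ∀ a, a < α → ∀ b, b < α → p a b < α} with hDdef
  set S : Set Ordinal := {α | α < κ.ord ∧ W ∩ Set.Iio α = A α} with hSdef
  have claim1 : ∀ b α, α ∈ S → α ∈ D → Z b ∩ Set.Iio α = c α (nd b α) := by
    intro b α hαS hαD
    obtain ⟨hαΩ, -, hαω, hαcl⟩ := hαD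
    ext γ
    simp only [hZ, hc, Set.mem_inter_iff, Set.mem_setOf_eq, Set.mem_Iio]
    constructor
    · rintro ⟨⟨β, hωβ, hβΩ, rfl⟩, hγα⟩
      have hβα : β < α :=
        lt_of_le_of_lt (hp3 β (E (nd b β)) hβΩ (lt_trans (hEnd b β hωβ hβΩ) hβΩ)).1 hγα
      exact ⟨β, nd b β, hωβ, hβα, hltnd b β α hβα hαΩ, hnd2 b β hβΩ, rfl⟩
    · rintro ⟨β, y, hωβ, hβα, hlty, hlevy, rfl⟩
      have hβΩ : β < κ.ord := lt_trans hβα hαΩ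
      have hy : y = nd b β := by
        have := hprednd b α hαΩ y hlty (by rw [hlevy]; exact hβα)
        rwa [hlevy] at this
      constructor
      · exact ⟨β, hωβ, hβΩ, by rw [hy]⟩
      · refine hαcl β hβα (E y) ?_
        rw [hy]
        exact lt_trans (hEnd b β hωβ hβΩ) hβα
  have main : ∀ b : {b : Set T.N // T.IsBranch b},
      ∃ i, i < κ.ord ∧ Z b = {γ | γ < κ.ord ∧ p i γ ∈ W} := by
    intro b
    have hSstat : StationaryIn κ.ord (S ∩ D) := aux_stat_inter hreg h0 hWstat hD
    have hreg' : ∀ α ∈ S ∩ D, E (nd b α) < α := by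
      intro α hα
      exact hEnd b α (le_of_lt hα.2.2.2.1) hα.2.1
    obtain ⟨i, hi⟩ := aux_fodor hreg h0 hSstat (fun α => E (nd b α)) hreg'
    obtain ⟨α0, hα0, -, hient⟩ := hi 0 hΩ.pos
    have hiΩ : i < κ.ord := by
      rw [← hient]
      exact lt_trans (hreg' α0 hα0) hα0.2.1
    refine ⟨i, hiΩ, ?_⟩
    ext γ
    simp only [Set.mem_setOf_eq]
    constructor
    · intro hγ
      obtain ⟨β, hωβ, hβΩ, rfl⟩ := hγ
      obtain ⟨α, hαSD, hβα, hiα⟩ := hi β hβΩ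
      obtain ⟨hαS, hαD⟩ := hαSD
      have hαΩ : α < κ.ord := hαD.1
      have hEβ : E (nd b β) < β := hEnd b β hωβ hβΩ
      have hγα : p β (E (nd b β)) < α :=
        hαD.2.2.2 β hβα _ (lt_trans hEβ hβα)
      have hγΩ : p β (E (nd b β)) < κ.ord := lt_trans hγα hαΩ
      refine ⟨hγΩ, ?_⟩
      have hiα' : i < α := by
        rw [← hiα]
        exact hEnd b α (le_of_lt hαD.2.2.1) hαΩ
      have hmem : p i (p β (E (nd b β))) ∈ A α := by
        simp only [hA, Set.mem_setOf_eq]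
        refine ⟨hαD.2.2.2 i hiα' _ hγα, nd b α, p β (E (nd b β)), hnd2 b α hαΩ, ?_,
          by rw [hiα]⟩
        have hmem2 : p β (E (nd b β)) ∈ Z b ∩ Set.Iio α := by
          refine ⟨?_, hγα⟩
          simp only [hZ, Set.mem_setOf_eq]
          exact ⟨β, hωβ, hβΩ, rfl⟩
        rw [claim1 b α hαS hαD] at hmem2
        exact hmem2
      rw [← hαS.2] at hmem
      exact hmem.1
    · rintro ⟨hγΩ, hγW⟩
      obtain ⟨α, hαSD, hγα, hiα⟩ := hi γ hγΩ
      obtain ⟨hαS, hαD⟩ := hαSD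
      have hαΩ : α < κ.ord := hαD.1
      have hωα : Ordinal.omega0 ≤ α := le_of_lt hαD.2.2.1
      have hiα' : i < α := by
        rw [← hiα]
        exact hEnd b α hωα hαΩ
      have hpiγ : p i γ < α := hαD.2.2.2 i hiα' γ hγα
      have hmem : p i γ ∈ A α := by
        rw [← hαS.2]
        exact ⟨hγW, hpiγ⟩
      simp only [hA, Set.mem_setOf_eq] at hmem
      obtain ⟨-, x, γ', hlevx, hγ'c, heq⟩ := hmem
      have hEx : E x < α := by
        have := hE1 x (by rw [hlevx]; exact hωα)
        rwa [hlevx] at this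
      simp only [hc, Set.mem_setOf_eq] at hγ'c
      obtain ⟨β, y, hωβ, hβα, hlty, hlevy, hγ'eq⟩ := hγ'c
      have hEy : E y < β := by
        have := hE1 y (by rw [hlevy]; exact hωβ)
        rwa [hlevy] at this
      have hγ'Ω : γ' < κ.ord := by
        rw [hγ'eq]
        exact lt_trans (hαD.2.2.2 β hβα (E y) (lt_trans hEy hβα)) hαΩ
      obtain ⟨hi1, hi2⟩ := hp1 i γ (E x) γ' hiΩ hγΩ (lt_trans hEx hαΩ) hγ'Ω heq
      have hxnd : x = nd b α := by
        refine hE2 x (nd b α) (by rw [hlevx]; exact hωα) ?_ ?_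
        · rw [hlevx, hnd2 b α hαΩ]
        · rw [← hi1, ← hiα]
      have hγc : γ ∈ c α (nd b α) := by
        simp only [hc, Set.mem_setOf_eq]
        refine ⟨β, y, hωβ, hβα, ?_, hlevy, by rw [hi2, hγ'eq]⟩
        rw [← hxnd]
        exact hlty
      rw [← claim1 b α hαS hαD] at hγc
      have hZb : p β (E y) ∈ Z b := by
        have := hγc.1
        rwa [hi2, hγ'eq] at this
      rw [hi2, hγ'eq]
      exact hZb
  choose I hIΩ hIZ using main
  have hinj : Function.Injective I := by
    intro b b' hbb'
    apply hext b b'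
    intro β hωβ hβΩ
    have hZeq : Z b = Z b' := by rw [hIZ b, hIZ b', hbb']
    have hmem : p β (E (nd b β)) ∈ Z b' := by
      rw [← hZeq]
      simp only [hZ, Set.mem_setOf_eq]
      exact ⟨β, hωβ, hβΩ, rfl⟩
    simp only [hZ, Set.mem_setOf_eq] at hmem
    obtain ⟨β', hωβ', hβ'Ω, heq⟩ := hmem
    obtain ⟨h1, h2⟩ := hp1 β (E (nd b β)) β' (E (nd b' β')) hβΩ
      (lt_trans (hEnd b β hωβ hβΩ) hβΩ) hβ'Ω
      (lt_trans (hEnd b' β' hωβ' hβ'Ω) hβ'Ω) heq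
    subst h1
    refine hE2 (nd b β) (nd b' β) ?_ ?_ h2
    · rw [hnd2 b β hβΩ]; exact hωβ
    · rw [hnd2 b β hβΩ, hnd2 b' β hβΩ]
  have hfin : Cardinal.lift.{1} #{b : Set T.N // T.IsBranch b} ≤
      Cardinal.lift.{0} #(↥(Set.Iio κ.ord)) :=
    Cardinal.lift_mk_le'.mpr
      ⟨⟨fun b => ⟨I b, hIΩ b⟩, fun b b' h => hinj (congrArg Subtype.val h)⟩⟩
  rw [Ordinal.mk_Iio_ordinal, Cardinal.card_ord] at hfin
  simpa using hfin

end
end
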